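/- arXiv:2205.02624 — 15 statements merged into one kernel-verified Lean document; each statement's English description precedes it below -/
import Mathlib

section
/- Let (X, K) be a generalized Stone space. Let {U_i : i ∈ I} and {V_j : j ∈ J} be nonempty families of elements of D_K(X) such that ⋂{U_i : i ∈ I} ⊆ ⋃{V_j : j ∈ J}. Then there exist finitely many indices i_1, …, i_n ∈ I and j_1, …, j_k ∈ J such that U_{i_1} ∩ … ∩ U_{i_n} ⊆ V_{j_1} ∪ … ∪ V_{j_k}. -/
open Set TopologicalSpace

/-- A family of sets is downward-directed if any two members contain a common member. -/
def DirDown {X : Type*} (F : Set (Set X)) : Prop :=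
  ∀ U ∈ F, ∀ V ∈ F, ∃ W ∈ F, W ⊆ U ∩ V

/-- A family of sets is upward-directed if any two members are contained in a common member. -/
def DirUp {X : Type*} (F : Set (Set X)) : Prop :=
  ∀ U ∈ F, ∀ V ∈ F, ∃ W ∈ F, U ∪ V ⊆ W

/-- `(X, K)` is a generalized Stone space. -/
structure IsGenStone {X : Type*} [TopologicalSpace X] (K : Set (Set X)) : Prop where
  sep : ∀ x y : X, x ≠ y → ∃ U ∈ K, x ∈ U ∧ y ∉ U
  basis : IsTopologicalBasis K
  compact : ∀ U ∈ K, IsCompact U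
  diff_mem : ∀ A ∈ K, ∀ B ∈ K, A ∩ Bᶜ ∈ K
  union_mem : ∀ A ∈ K, ∀ B ∈ K, A ∪ B ∈ K
  dir_inter : ∀ Y : Set X, IsClosed Y → ∀ I ⊆ K, I.Nonempty → DirDown I →
    (∀ U ∈ I, (Y ∩ U).Nonempty) → (Y ∩ ⋂₀ I).Nonempty

/-- The dual family `D_K(X)` of sets whose complement lies in `K`. -/
def DK {X : Type*} (K : Set (Set X)) : Set (Set X) := {U | Uᶜ ∈ K}

/-- `(X, K, R)` is a generalized modal space. -/
structure IsGenModal {X : Type*} [TopologicalSpace X] (K : Set (Set X))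
    (R : X → X → Prop) : Prop where
  toIsGenStone : IsGenStone K
  closed_succ : ∀ x : X, IsClosed {y | R x y}
  box_mem : ∀ U ∈ DK K, {x : X | ∀ y, R x y → y ∈ U} ∈ DK K

/-!
Put `Y := ⋂ i, U i`, a closed set since each `(U i)ᶜ` is a basic open set. The hypothesis says
that `Y` misses `⋂ j, (V j)ᶜ`, the intersection of the downward-directed family of finite
intersections of the sets `(V j)ᶜ ∈ K`; by (S5) `Y` already misses one of them,
`W := ⋂ j ∈ t, (V j)ᶜ`. That set lies in `K`, hence is compact, and it misses the intersection of
the closed sets `U i`, so it misses a finite subintersection `⋂ i ∈ s, U i`.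
-/

namespace IsGenStone

variable {X : Type*} [TopologicalSpace X] {K : Set (Set X)}

theorem isOpen_of_mem (hX : IsGenStone K) {A : Set X} (hA : A ∈ K) : IsOpen A :=
  hX.basis.isOpen hA

theorem isClosed_of_mem_DK (hX : IsGenStone K) {U : Set X} (hU : U ∈ DK K) : IsClosed U :=
  isOpen_compl_iff.mp (hX.isOpen_of_mem hU)

theorem inter_mem (hX : IsGenStone K) {A B : Set X} (hA : A ∈ K) (hB : B ∈ K) : A ∩ B ∈ K := by
  have h := hX.diff_mem A hA (A ∩ Bᶜ) (hX.diff_mem A hA B hB)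
  rwa [compl_inter, compl_compl, inter_union_distrib_left, inter_compl_self, empty_union] at h

theorem biInter_mem {ι : Type*} (hX : IsGenStone K) {F : ι → Set X} (hF : ∀ i, F i ∈ K)
    {t : Finset ι} (ht : t.Nonempty) : ⋂ i ∈ t, F i ∈ K := by
  classical
  induction ht using Finset.Nonempty.cons_induction with
  | singleton a => simpa using hF a
  | cons a s _ _ ih =>
    rw [Finset.cons_eq_insert, Finset.set_biInter_insert]
    exact hX.inter_mem (hF a) ih

theorem exists_finset_inter_biInter_eq_empty {ι : Type*} [Nonempty ι] (hX : IsGenStone K)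
    {Y : Set X} (hY : IsClosed Y) {F : ι → Set X} (hF : ∀ i, F i ∈ K)
    (hYF : Y ∩ ⋂ i, F i = ∅) : ∃ t : Finset ι, t.Nonempty ∧ Y ∩ ⋂ i ∈ t, F i = ∅ := by
  classical
  by_contra! hmeets
  set 𝓕 : Set (Set X) := range fun t : {t : Finset ι // t.Nonempty} => ⋂ i ∈ t.1, F i
  have h𝓕K : 𝓕 ⊆ K := by
    rintro _ ⟨t, rfl⟩
    exact hX.biInter_mem hF t.2
  have h𝓕dir : DirDown 𝓕 := by
    rintro _ ⟨t₁, rfl⟩ _ ⟨t₂, rfl⟩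
    refine ⟨_, ⟨⟨t₁.1 ∪ t₂.1, t₁.2.mono Finset.subset_union_left⟩, rfl⟩, ?_⟩
    exact subset_inter (biInter_subset_biInter_left fun i ↦ Finset.mem_union_left _)
      (biInter_subset_biInter_left fun i ↦ Finset.mem_union_right _)
  have h𝓕sub : ⋂₀ 𝓕 ⊆ ⋂ i, F i := fun x hx ↦ mem_iInter.mpr fun i ↦ by
    simpa using hx _ ⟨⟨{i}, Finset.singleton_nonempty i⟩, rfl⟩
  have h𝓕ne : 𝓕.Nonempty := ⟨_, ⟨{Classical.arbitrary ι}, Finset.singleton_nonempty _⟩, rfl⟩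
  obtain ⟨x, hxY, hx𝓕⟩ := hX.dir_inter Y hY 𝓕 h𝓕K h𝓕ne h𝓕dir
    (by rintro _ ⟨t, rfl⟩; exact hmeets t.1 t.2)
  exact hYF.subset ⟨hxY, h𝓕sub hx𝓕⟩

end IsGenStone

/-- Lemma (pseudo-compactness): if the intersection of a nonempty family of elements of
`D_K(X)` is contained in the union of a nonempty family of elements of `D_K(X)`, then some
finite subintersection is contained in some finite subunion. -/
theorem stmt0 {X : Type*} [TopologicalSpace X] {K : Set (Set X)} (hX : IsGenStone K)
    {I J : Type*} [Nonempty I] [Nonempty J] (U : I → Set X) (V : J → Set X)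
    (hU : ∀ i, U i ∈ DK K) (hV : ∀ j, V j ∈ DK K)
    (hsub : (⋂ i, U i) ⊆ ⋃ j, V j) :
    ∃ (s : Finset I) (t : Finset J), s.Nonempty ∧ t.Nonempty ∧
      (⋂ i ∈ s, U i) ⊆ ⋃ j ∈ t, V j := by
  classical
  obtain ⟨t, ht, hYt⟩ := hX.exists_finset_inter_biInter_eq_empty
    (isClosed_iInter fun i ↦ hX.isClosed_of_mem_DK (hU i)) (F := fun j ↦ (V j)ᶜ) hV
    (by rwa [← compl_iUnion, ← sdiff_eq, sdiff_eq_empty])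
  have hW : IsCompact (⋂ j ∈ t, (V j)ᶜ) := hX.compact _ (hX.biInter_mem hV ht)
  obtain ⟨s, hWs⟩ := hW.elim_finite_subfamily_closed U (fun i ↦ hX.isClosed_of_mem_DK (hU i))
    (by rw [inter_comm]; exact hYt)
  obtain ⟨i₀⟩ := ‹Nonempty I›
  refine ⟨insert i₀ s, t, Finset.insert_nonempty _ _, ht, ?_⟩
  intro x hx
  by_contra hxV
  refine hWs.subset ⟨by simpa using hxV, mem_iInter₂.2 fun i hi ↦ ?_⟩
  exact mem_iInter₂.1 hx i (Finset.mem_insert_of_mem hi)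
end

section
/- Let X be a topological space and K a family of subsets of X satisfying: for all x ≠ y in X there exists U ∈ K with x ∈ U and y ∉ U; K is a basis of compact subsets for the topology of X; A ∩ Bᶜ ∈ K and A ∪ B ∈ K for all A, B ∈ K. Then the following two conditions are equivalent: (i) for every closed subset Y of X and every nonempty downward-directed subfamily I of K, if Y ∩ U ≠ ∅ for each U ∈ I, then Y ∩ ⋂I ≠ ∅; (ii) for every closed subset Y of X and every nonempty upward-directed subfamily F of D_K(X), if Y ⊆ ⋃{U : U ∈ F}, then Y ⊆ U for some U ∈ F. -/
open Set TopologicalSpace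

/-- The compactness-style condition (S5) on downward-directed subfamilies of `K` is
equivalent to the covering condition on upward-directed subfamilies of `D_K(X)`. -/
theorem stmt1 {X : Type*} [TopologicalSpace X] {K : Set (Set X)}
    (sep : ∀ x y : X, x ≠ y → ∃ U ∈ K, x ∈ U ∧ y ∉ U)
    (basis : IsTopologicalBasis K)
    (compact : ∀ U ∈ K, IsCompact U)
    (diff_mem : ∀ A ∈ K, ∀ B ∈ K, A ∩ Bᶜ ∈ K)
    (union_mem : ∀ A ∈ K, ∀ B ∈ K, A ∪ B ∈ K) :
    (∀ Y : Set X, IsClosed Y → ∀ I ⊆ K, I.Nonempty → DirDown I →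
        (∀ U ∈ I, (Y ∩ U).Nonempty) → (Y ∩ ⋂₀ I).Nonempty) ↔
    (∀ Y : Set X, IsClosed Y → ∀ F ⊆ DK K, F.Nonempty → DirUp F →
        Y ⊆ ⋃₀ F → ∃ U ∈ F, Y ⊆ U) := by
  constructor
  · intro h Y hY F hF hFne hdir hcov
    by_contra hno
    push_neg at hno
    have hne : ∀ U ∈ F, (Y ∩ Uᶜ).Nonempty := by
      intro U hU
      rcases not_subset.1 (hno U hU) with ⟨x, hxY, hxU⟩
      exact ⟨x, hxY, hxU⟩
    have := h Y hY (compl '' F) (by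
        rintro _ ⟨U, hU, rfl⟩; exact hF hU)
      (hFne.image _)
      (by
        rintro _ ⟨U, hU, rfl⟩ _ ⟨V, hV, rfl⟩
        rcases hdir U hU V hV with ⟨W, hW, hWs⟩
        exact ⟨Wᶜ, ⟨W, hW, rfl⟩, by
          simpa [Set.compl_union] using compl_subset_compl.2 hWs⟩)
      (by rintro _ ⟨U, hU, rfl⟩; exact hne U hU)
    rcases this with ⟨x, hxY, hx⟩
    rcases hcov hxY with ⟨U, hU, hxU⟩
    exact (hx Uᶜ ⟨U, hU, rfl⟩) hxU
  · intro h Y hY I hI hIne hdir hne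
    by_contra hempty
    have hcov : Y ⊆ ⋃₀ (compl '' I) := by
      intro x hxY
      by_contra hx
      refine hempty ⟨x, hxY, fun U hU => ?_⟩
      by_contra hxU
      exact hx ⟨Uᶜ, ⟨U, hU, rfl⟩, hxU⟩
    rcases h Y hY (compl '' I) (by
        rintro _ ⟨U, hU, rfl⟩; simpa [DK] using hI hU)
      (hIne.image _)
      (by
        rintro _ ⟨U, hU, rfl⟩ _ ⟨V, hV, rfl⟩
        rcases hdir U hU V hV with ⟨W, hW, hWs⟩
        exact ⟨Wᶜ, ⟨W, hW, rfl⟩, by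
          simpa [Set.compl_inter] using compl_subset_compl.2 hWs⟩)
      hcov with ⟨_, ⟨U, hU, rfl⟩, hYU⟩
    rcases hne U hU with ⟨x, hxY, hxU⟩
    exact hYU hxY hxU
end

section
/- Let (X, K) be a generalized Stone space. Then every closed subset Y of X is the intersection of a downward-directed family of elements of D_K(X), i.e., there exists a family {X_i : i ∈ I} ⊆ D_K(X), downward-directed under inclusion, with Y = ⋂{X_i : i ∈ I}. -/
open Set TopologicalSpace

/-- In a generalized Stone space, every closed subset is the intersection of a
downward-directed family of elements of `D_K(X)`. -/
theorem stmt5 {X : Type*} [TopologicalSpace X] {K : Set (Set X)} (hX : IsGenStone K)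
    {Y : Set X} (hY : IsClosed Y) :
    ∃ F ⊆ DK K, DirDown F ∧ Y = ⋂₀ F := by
  refine ⟨{U ∈ DK K | Y ⊆ U}, fun U hU => hU.1, ?_, ?_⟩
  · rintro U ⟨hU, hYU⟩ V ⟨hV, hYV⟩
    exact ⟨U ∩ V, ⟨by simpa [DK, Set.compl_inter] using hX.union_mem _ hU _ hV,
      Set.subset_inter hYU hYV⟩, le_refl _⟩
  · apply Set.Subset.antisymm
    · exact fun x hx U hU => hU.2 hx
    · intro x hx
      by_contra hxY
      obtain ⟨B, hBK, hxB, hBY⟩ := hX.basis.exists_subset_of_mem_open hxY hY.isOpen_compl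
      have : x ∉ B := by simpa using hx Bᶜ ⟨by simpa [DK] using hBK,
        fun y hy => fun hyB => hBY hyB hy⟩
      exact this hxB
end

section
/- Let (X, K, R) be a generalized modal space. Then for every closed subset Y of X, the relational image R[Y] = {x ∈ X : ∃y ∈ Y, R y x} is a closed subset of X. -/
open Set TopologicalSpace

/-- In a generalized modal space, the relational image `R[Y]` of a closed set `Y` is closed. -/
theorem stmt6 {X : Type*} [TopologicalSpace X] {K : Set (Set X)} {R : X → X → Prop}
    (hX : IsGenModal K R) {Y : Set X} (hY : IsClosed Y) :
    IsClosed {x : X | ∃ y ∈ Y, R y x} := by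

  have hS := hX.toIsGenStone
  -- K is closed under intersection
  have inter_mem : ∀ A ∈ K, ∀ B ∈ K, A ∩ B ∈ K := by
    intro A hA B hB
    have h1 := hS.diff_mem A hA _ (hS.diff_mem A hA B hB)
    have h : A ∩ (A ∩ Bᶜ)ᶜ = A ∩ B := by ext z; simp; tauto
    rwa [h] at h1
  -- the "diamond" of a member of K is in K
  have dia_mem : ∀ U ∈ K, {y : X | ∃ z, R y z ∧ z ∈ U} ∈ K := by
    intro U hU
    have hUc : Uᶜ ∈ DK K := by simp [DK, hU]
    have h1 := hX.box_mem _ hUc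
    simp only [DK, mem_setOf_eq] at h1
    have h : {x : X | ∀ y, R x y → y ∈ Uᶜ}ᶜ = {y : X | ∃ z, R y z ∧ z ∈ U} := by
      ext z; simp
    rwa [h] at h1
  apply isClosed_of_closure_subset
  intro x hx
  set S : Set X := {x : X | ∃ y ∈ Y, R y x} with hSdef
  set I : Set (Set X) := {U | U ∈ K ∧ x ∈ U} with hIdef
  have hIK : I ⊆ K := fun U hU => hU.1
  have hIne : I.Nonempty := by
    obtain ⟨U, hU, hxU, -⟩ := hS.basis.exists_subset_of_mem_open (mem_univ x) isOpen_univ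
    exact ⟨U, hU, hxU⟩
  have hIdir : DirDown I := by
    intro U hU V hV
    exact ⟨U ∩ V, ⟨inter_mem U hU.1 V hV.1, hU.2, hV.2⟩, subset_rfl⟩
  set J : Set (Set X) := (fun U => {y : X | ∃ z, R y z ∧ z ∈ U}) '' I with hJdef
  have hJK : J ⊆ K := by
    rintro _ ⟨U, hU, rfl⟩
    exact dia_mem U hU.1
  have hJne : J.Nonempty := hIne.image _
  have hJdir : DirDown J := by
    rintro _ ⟨U, hU, rfl⟩ _ ⟨V, hV, rfl⟩
    obtain ⟨W, hW, hWsub⟩ := hIdir U hU V hV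
    refine ⟨_, ⟨W, hW, rfl⟩, ?_⟩
    rintro y ⟨z, hz, hzW⟩
    exact ⟨⟨z, hz, (hWsub hzW).1⟩, ⟨z, hz, (hWsub hzW).2⟩⟩
  have hJmeet : ∀ U ∈ J, (Y ∩ U).Nonempty := by
    rintro _ ⟨U, hU, rfl⟩
    obtain ⟨z, hzU, y, hyY, hRyz⟩ := mem_closure_iff.mp hx U (hS.basis.isOpen hU.1) hU.2
    exact ⟨y, hyY, z, hRyz, hzU⟩
  obtain ⟨y, hyY, hyJ⟩ := hS.dir_inter Y hY J hJK hJne hJdir hJmeet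
  -- now show R y x, using dir_inter on the closed set R(y) and family I
  have hmeet : ∀ U ∈ I, ({z | R y z} ∩ U).Nonempty := by
    intro U hU
    have : y ∈ {y : X | ∃ z, R y z ∧ z ∈ U} := hyJ _ ⟨U, hU, rfl⟩
    obtain ⟨z, hz, hzU⟩ := this
    exact ⟨z, hz, hzU⟩
  obtain ⟨z, hzR, hzI⟩ := hS.dir_inter _ (hX.closed_succ y) I hIK hIne hIdir hmeet
  have hzx : z = x := by
    by_contra hne
    obtain ⟨U, hU, hxU, hzU⟩ := hS.sep x z (Ne.symm hne)
    exact hzU (hzI U ⟨hU, hxU⟩)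
  exact ⟨y, hyY, hzx ▸ hzR⟩
end

section
/- Let (X, K, R) be a generalized modal space. Then for every closed subset Y of X, the set □Y := {x ∈ X : ∀y, R x y → y ∈ Y} is a closed subset of X. -/
open Set TopologicalSpace

/-- In a generalized modal space, `□Y` is closed for every closed set `Y`. -/
theorem stmt7 {X : Type*} [TopologicalSpace X] {K : Set (Set X)} {R : X → X → Prop}
    (hX : IsGenModal K R) {Y : Set X} (hY : IsClosed Y) :
    IsClosed {x : X | ∀ y, R x y → y ∈ Y} := by
  have key : {x : X | ∀ y, R x y → y ∈ Y} =
      ⋂ U ∈ {U ∈ DK K | Y ⊆ U}, {x : X | ∀ y, R x y → y ∈ U} := by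
    ext x
    simp only [mem_setOf_eq, mem_iInter]
    constructor
    · intro h U hU y hxy
      exact hU.2 (h y hxy)
    · intro h y hxy
      by_contra hyY
      obtain ⟨A, hAK, hyA, hAY⟩ :=
        hX.toIsGenStone.basis.exists_subset_of_mem_open hyY hY.isOpen_compl
      have hU : Aᶜ ∈ {U ∈ DK K | Y ⊆ U} := by
        refine ⟨by simpa [DK] using hAK, fun z hz hzA => hAY hzA hz⟩
      exact (h Aᶜ hU y hxy) hyA
  rw [key]
  refine isClosed_biInter fun U hU => ?_
  have hbox := hX.box_mem U hU.1
  have : IsOpen {x : X | ∀ y, R x y → y ∈ U}ᶜ :=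
    hX.toIsGenStone.basis.isOpen hbox
  rw [← isOpen_compl_iff]; exact this
end

section
/- Let (X, K) be a generalized Stone space. Let {U_i : i ∈ I} be a nonempty downward-directed family of closed subsets of X and let V ∈ D_K(X) be such that ⋂{U_i : i ∈ I} ⊆ V. Then there exists i ∈ I such that U_i ⊆ V. -/
open Set TopologicalSpace

/-- If a nonempty downward-directed family of closed sets has intersection contained in
some `V ∈ D_K(X)`, then some member of the family is already contained in `V`. -/
theorem stmt8 {X : Type*} [TopologicalSpace X] {K : Set (Set X)} (hX : IsGenStone K)
    {I : Type*} [Nonempty I] (U : I → Set X) (hU : ∀ i, IsClosed (U i))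
    (hdir : ∀ i j : I, ∃ k : I, U k ⊆ U i ∩ U j)
    {V : Set X} (hV : V ∈ DK K) (hsub : (⋂ i, U i) ⊆ V) :
    ∃ i : I, U i ⊆ V := by
  have hcomp : IsCompact Vᶜ := hX.compact _ hV
  have hcover : Vᶜ ⊆ ⋃ i, (U i)ᶜ := by
    intro x hx
    by_contra h
    simp only [mem_iUnion, mem_compl_iff, not_exists, not_not] at h
    exact hx (hsub (mem_iInter.2 h))
  have hd : Directed (· ⊆ ·) (fun i => (U i)ᶜ) := by
    intro i j
    obtain ⟨k, hk⟩ := hdir i j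
    exact ⟨k, compl_subset_compl.2 (hk.trans inter_subset_left),
      compl_subset_compl.2 (hk.trans inter_subset_right)⟩
  obtain ⟨i, hi⟩ := hcomp.elim_directed_cover _ (fun i => (hU i).isOpen_compl) hcover hd
  exact ⟨i, compl_subset_compl.1 hi⟩
end

section
/- Let (X, K, R) be a generalized modal space and let {X_i : i ∈ I} be a nonempty downward-directed family of elements of D_K(X). Then R[⋂{X_i : i ∈ I}] = ⋂{R[X_i] : i ∈ I}, where R[Y] = {x ∈ X : ∃y ∈ Y, R y x}. -/
open Set TopologicalSpace

private lemma K_inter {X : Type*} {K : Set (Set X)}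
    (h : ∀ A ∈ K, ∀ B ∈ K, A ∩ Bᶜ ∈ K) {A B : Set X} (hA : A ∈ K) (hB : B ∈ K) :
    A ∩ B ∈ K := by
  have h1 := h A hA (A ∩ Bᶜ) (h A hA B hB)
  have h2 : A ∩ (A ∩ Bᶜ)ᶜ = A ∩ B := by
    ext z
    simp only [mem_inter_iff, mem_compl_iff, not_and, not_not]
    tauto
  rwa [h2] at h1

private lemma dm_mem {X : Type*} [TopologicalSpace X] {K : Set (Set X)} {R : X → X → Prop}
    (hX : IsGenModal K R) {B : Set X} (hB : B ∈ K) :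
    {y : X | ∃ z, R y z ∧ z ∈ B} ∈ K := by
  have h : {w : X | ∀ y, R w y → y ∈ Bᶜ}ᶜ ∈ K :=
    hX.box_mem Bᶜ (by simpa [DK] using hB)
  have he : {y : X | ∃ z, R y z ∧ z ∈ B} = {w : X | ∀ y, R w y → y ∈ Bᶜ}ᶜ := by
    ext y
    simp only [mem_compl_iff, mem_setOf_eq, not_forall, exists_prop, not_not]
  rw [he]; exact h

/-- The inverse-image modality `◆` (relational image) distributes over intersections of
nonempty downward-directed families of elements of `D_K(X)`. -/
theorem stmt9 {X : Type*} [TopologicalSpace X] {K : Set (Set X)} {R : X → X → Prop}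
    (hX : IsGenModal K R) {I : Type*} [Nonempty I] (Z : I → Set X)
    (hZ : ∀ i, Z i ∈ DK K) (hdir : ∀ i j : I, ∃ k : I, Z k ⊆ Z i ∩ Z j) :
    {x : X | ∃ y ∈ ⋂ i, Z i, R y x} = ⋂ i, {x : X | ∃ y ∈ Z i, R y x} := by
  classical
  have hS := hX.toIsGenStone
  ext x
  simp only [mem_iInter, mem_setOf_eq]
  constructor
  · rintro ⟨y, hy, hR⟩ i
    exact ⟨y, hy i, hR⟩
  · intro hx
    obtain ⟨j₀⟩ := ‹Nonempty I›
    obtain ⟨B₀, hB₀K, hxB₀, -⟩ :=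
      hS.basis.exists_subset_of_mem_open (mem_univ x) isOpen_univ
    -- membership of intersections with Z j in K
    have hKZ : ∀ A ∈ K, ∀ j : I, A ∩ Z j ∈ K := by
      intro A hA j
      have := hS.diff_mem A hA (Z j)ᶜ (hZ j)
      rwa [compl_compl] at this
    set F : Set (Set X) :=
      {A | ∃ B, B ∈ K ∧ x ∈ B ∧ ∃ j : I, A = {y : X | ∃ z, R y z ∧ z ∈ B} ∩ Z j} with hF
    have hFK : F ⊆ K := by
      rintro A ⟨B, hB, -, j, rfl⟩
      exact hKZ _ (dm_mem hX hB) j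
    have hFne : F.Nonempty :=
      ⟨_, B₀, hB₀K, hxB₀, j₀, rfl⟩
    have hFdir : DirDown F := by
      rintro A ⟨B1, hB1, hx1, j1, rfl⟩ A' ⟨B2, hB2, hx2, j2, rfl⟩
      obtain ⟨k, hk⟩ := hdir j1 j2
      refine ⟨{y : X | ∃ z, R y z ∧ z ∈ B1 ∩ B2} ∩ Z k,
        ⟨B1 ∩ B2, K_inter hS.diff_mem hB1 hB2, ⟨hx1, hx2⟩, k, rfl⟩, ?_⟩
      rintro y ⟨⟨z, hz, hz1, hz2⟩, hyk⟩
      exact ⟨⟨⟨z, hz, hz1⟩, (hk hyk).1⟩, ⟨z, hz, hz2⟩, (hk hyk).2⟩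
    have hFmeet : ∀ U ∈ F, ((univ : Set X) ∩ U).Nonempty := by
      rintro A ⟨B, hB, hxB, j, rfl⟩
      obtain ⟨y, hyZ, hyR⟩ := hx j
      exact ⟨y, mem_univ y, ⟨x, hyR, hxB⟩, hyZ⟩
    obtain ⟨z, hz⟩ := hS.dir_inter univ isClosed_univ F hFK hFne hFdir hFmeet
    have hz2 : z ∈ ⋂₀ F := hz.2
    have hzZ : ∀ j : I, z ∈ Z j := fun j =>
      (hz2 _ ⟨B₀, hB₀K, hxB₀, j, rfl⟩).2
    have hzR : R z x := by
      by_contra hcon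
      have hxo : x ∈ {y | R z y}ᶜ := hcon
      obtain ⟨B, hBK, hxB, hBsub⟩ :=
        hS.basis.exists_subset_of_mem_open hxo (hX.closed_succ z).isOpen_compl
      obtain ⟨⟨w, hw, hwB⟩, -⟩ := hz2 _ ⟨B, hBK, hxB, j₀, rfl⟩
      exact hBsub hwB hw
    exact ⟨z, hzZ, hzR⟩
end

section
/- Let (X, K, R) be a generalized modal space and let {X_i : i ∈ I} be a nonempty downward-directed family of closed subsets of X. Then R[⋂{X_i : i ∈ I}] = ⋂{R[X_i] : i ∈ I}, where R[Y] = {x ∈ X : ∃y ∈ Y, R y x}. -/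
open Set TopologicalSpace

lemma IsGenStone.inter_mem_s10 {X : Type*} [TopologicalSpace X] {K : Set (Set X)}
    (hK : IsGenStone K) {A B : Set X} (hA : A ∈ K) (hB : B ∈ K) : A ∩ B ∈ K := by
  have h := hK.diff_mem A hA (A ∩ Bᶜ) (hK.diff_mem A hA B hB)
  have : A ∩ (A ∩ Bᶜ)ᶜ = A ∩ B := by ext z; simp; tauto
  rwa [this] at h

/-- The inverse-image modality `◆` (relational image) distributes over intersections of
nonempty downward-directed families of closed subsets. -/
theorem stmt10 {X : Type*} [TopologicalSpace X] {K : Set (Set X)} {R : X → X → Prop}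
    (hX : IsGenModal K R) {I : Type*} [Nonempty I] (Z : I → Set X)
    (hZ : ∀ i, IsClosed (Z i)) (hdir : ∀ i j : I, ∃ k : I, Z k ⊆ Z i ∩ Z j) :
    {x : X | ∃ y ∈ ⋂ i, Z i, R y x} = ⋂ i, {x : X | ∃ y ∈ Z i, R y x} := by
  apply Set.Subset.antisymm
  · rintro x ⟨y, hy, hR⟩
    simp only [Set.mem_iInter] at hy ⊢
    exact fun i => ⟨y, hy i, hR⟩
  intro x hx
  simp only [Set.mem_iInter, Set.mem_setOf_eq] at hx
  set C : Set X := {y | R y x} with hC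
  set Box : Set X → Set X := fun U => {z | ∀ w, R z w → w ∈ U} with hBox
  set S : Set (Set X) := {U | U ∈ DK K ∧ x ∉ U} with hS
  set F : Set (Set X) := (fun U => (Box U)ᶜ) '' S with hF
  have hFK : F ⊆ K := by
    rintro _ ⟨U, ⟨hU, -⟩, rfl⟩
    exact hX.box_mem U hU
  have hFne : F.Nonempty := by
    obtain ⟨V, hVK, hxV, -⟩ :=
      hX.toIsGenStone.basis.exists_subset_of_mem_open (Set.mem_univ x) isOpen_univ
    refine ⟨(Box Vᶜ)ᶜ, ⟨Vᶜ, ⟨?_, ?_⟩, rfl⟩⟩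
    · simpa [DK] using hVK
    · simp [hxV]
  have hFdir : DirDown F := by
    rintro _ ⟨U, ⟨hU, hxU⟩, rfl⟩ _ ⟨V, ⟨hV, hxV⟩, rfl⟩
    refine ⟨(Box (U ∪ V))ᶜ, ⟨U ∪ V, ⟨?_, ?_⟩, rfl⟩, ?_⟩
    · show (U ∪ V)ᶜ ∈ K
      rw [Set.compl_union]
      exact hX.toIsGenStone.inter_mem_s10 hU hV
    · simp [hxU, hxV]
    · intro z hz
      constructor <;>
      · intro hzB
        exact hz fun w hw => by
          first
            | exact Or.inl (hzB w hw)
            | exact Or.inr (hzB w hw)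
  have hCF : C = ⋂₀ F := by
    apply Set.Subset.antisymm
    · rintro y hy _ ⟨U, ⟨hU, hxU⟩, rfl⟩
      intro hyB
      exact hxU (hyB x hy)
    · intro y hy
      by_contra hyx
      have hcl := hX.closed_succ y
      obtain ⟨V, hVK, hxV, hVsub⟩ :=
        hX.toIsGenStone.basis.exists_subset_of_mem_open (a := x)
          (show x ∈ {w | R y w}ᶜ from hyx) hcl.isOpen_compl
      have hmem : (Box Vᶜ)ᶜ ∈ F := by
        refine ⟨Vᶜ, ⟨?_, by simp [hxV]⟩, rfl⟩
        simpa [DK] using hVK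
      have := hy _ hmem
      exact this fun w hw hwV => (hVsub hwV) hw
  have hCcomp : IsCompact C := by
    apply isCompact_of_finite_subcover
    intro ι O hO hCO
    have hne : ¬ (((⋃ a, O a)ᶜ) ∩ ⋂₀ F).Nonempty := by
      rw [← hCF]
      rintro ⟨z, hz1, hz2⟩
      exact hz1 (hCO hz2)
    have := mt (hX.toIsGenStone.dir_inter ((⋃ a, O a)ᶜ)
      (isOpen_iUnion hO).isClosed_compl F hFK hFne hFdir) hne
    push_neg at this
    obtain ⟨U, hUF, hU⟩ := this
    have hUsub : U ⊆ ⋃ a, O a := by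
      intro z hz
      by_contra hzO
      have : z ∈ (∅ : Set X) := hU ▸ (⟨hzO, hz⟩ : z ∈ (⋃ a, O a)ᶜ ∩ U)
      exact this
    obtain ⟨t, ht⟩ := (hX.toIsGenStone.compact U (hFK hUF)).elim_finite_subcover O hO hUsub
    exact ⟨t, fun z hz => ht (by rw [hCF] at hz; exact hz U hUF)⟩
  have hfin : ∀ u : Finset I, (C ∩ ⋂ i ∈ u, Z i).Nonempty := by
    intro u
    have : ∃ k : I, Z k ⊆ ⋂ i ∈ u, Z i := by
      classical
      induction u using Finset.induction with
      | empty => exact ⟨Classical.arbitrary I, by simp⟩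
      | @insert a s _ ih =>
        obtain ⟨k, hk⟩ := ih
        obtain ⟨m, hm⟩ := hdir a k
        exact ⟨m, by
          simp only [Finset.mem_insert, Set.iInter_iInter_eq_or_left]
          exact Set.subset_inter (fun z hz => (hm hz).1)
            (subset_trans (fun z hz => (hm hz).2) hk)⟩
    obtain ⟨k, hk⟩ := this
    obtain ⟨y, hy, hR⟩ := hx k
    exact ⟨y, hR, hk hy⟩
  obtain ⟨y, hyC, hyZ⟩ := hCcomp.inter_iInter_nonempty Z hZ hfin
  exact ⟨y, hyZ, hyC⟩
end

section
/- Let A be a generalized Boolean algebra and let a, b ∈ A with a ≰ b. Then there exists a maximal filter P of A such that a ∈ P and b ∉ P. In particular, the map σ : A → P(Ul(A)) defined by σ(a) = {P ∈ Ul(A) : a ∈ P} is injective. -/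
open Set

/-- A generalized Boolean algebra in the sense of Stone: a generalized Heyting algebra
satisfying `a ⊔ b = (a ⇨ b) ⇨ b`. -/
class GenBoolAlg (A : Type*) extends GeneralizedHeytingAlgebra A where
  sup_eq_himp_himp : ∀ a b : A, a ⊔ b = (a ⇨ b) ⇨ b

/-- A filter of a generalized Boolean algebra: a subset containing `⊤` (hence nonempty),
upward closed and closed under meets. -/
def IsGBAFilter {A : Type*} [GenBoolAlg A] (F : Set A) : Prop :=
  ⊤ ∈ F ∧ (∀ a ∈ F, ∀ b : A, a ≤ b → b ∈ F) ∧ (∀ a ∈ F, ∀ b ∈ F, a ⊓ b ∈ F)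

/-- A maximal filter: a proper filter whose only extensions among filters are itself and
the whole algebra. -/
def IsMaxGBAFilter {A : Type*} [GenBoolAlg A] (F : Set A) : Prop :=
  IsGBAFilter F ∧ F ≠ Set.univ ∧
    ∀ G : Set A, IsGBAFilter G → F ⊆ G → G = F ∨ G = Set.univ

lemma gba_sup_himp_top {A : Type*} [GenBoolAlg A] (x y : A) : x ⊔ (x ⇨ y) = ⊤ := by
  rw [GenBoolAlg.sup_eq_himp_himp x (x ⇨ y),
    show x ⇨ (x ⇨ y) = x ⇨ y from by rw [himp_himp, inf_idem], himp_self]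

/-- Separation lemma: if `a ≰ b`, there is a maximal filter containing `a` but not `b`. -/
lemma gba_separation {A : Type*} [GenBoolAlg A] (a b : A) (hab : ¬ a ≤ b) :
    ∃ P : Set A, IsMaxGBAFilter P ∧ a ∈ P ∧ b ∉ P := by
  set S : Set (Set A) := {F | IsGBAFilter F ∧ a ∈ F ∧ b ∉ F} with hS
  have hbase : {x : A | a ≤ x} ∈ S := by
    refine ⟨⟨le_top, fun p hp q hpq => le_trans hp hpq,
      fun p hp q hq => le_inf hp hq⟩, le_refl a, hab⟩
  have hchain : ∀ c ⊆ S, IsChain (· ⊆ ·) c → c.Nonempty → ∃ ub ∈ S, ∀ s ∈ c, s ⊆ ub := by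
    rintro c hcS hchain ⟨F0, hF0⟩
    refine ⟨⋃₀ c, ⟨⟨⟨F0, hF0, (hcS hF0).1.1⟩, ?_, ?_⟩, ⟨F0, hF0, (hcS hF0).2.1⟩, ?_⟩,
      fun s hs => subset_sUnion_of_mem hs⟩
    · rintro p ⟨F, hF, hpF⟩ q hpq
      exact ⟨F, hF, (hcS hF).1.2.1 p hpF q hpq⟩
    · rintro p ⟨F, hF, hpF⟩ q ⟨G, hG, hqG⟩
      rcases hchain.total hF hG with h | h
      · exact ⟨G, hG, (hcS hG).1.2.2 p (h hpF) q hqG⟩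
      · exact ⟨F, hF, (hcS hF).1.2.2 p hpF q (h hqG)⟩
    · rintro ⟨F, hF, hbF⟩
      exact (hcS hF).2.2 hbF
  obtain ⟨P, hP0, hPm0⟩ := zorn_subset_nonempty S hchain _ hbase
  have hPm := hPm0
  obtain ⟨hPfil, haP, hbP⟩ := hPm0.prop
  -- key property: x ∉ P → x ⇨ b ∈ P
  have key : ∀ x : A, x ∉ P → x ⇨ b ∈ P := by
    intro x hx
    set G : Set A := {z | ∃ p ∈ P, p ⊓ x ≤ z} with hG
    have hGfil : IsGBAFilter G := by
      refine ⟨⟨⊤, hPfil.1, le_top⟩, ?_, ?_⟩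
      · rintro p ⟨q, hq, hle⟩ r hpr
        exact ⟨q, hq, hle.trans hpr⟩
      · rintro p ⟨q, hq, hle⟩ r ⟨q', hq', hle'⟩
        refine ⟨q ⊓ q', hPfil.2.2 q hq q' hq', ?_⟩
        calc q ⊓ q' ⊓ x = (q ⊓ x) ⊓ (q' ⊓ x) := by
              rw [inf_inf_distrib_right]
          _ ≤ p ⊓ r := inf_le_inf hle hle'
    have hPG : P ⊆ G := fun p hp => ⟨p, hp, inf_le_left⟩
    have hbG : b ∈ G := by
      by_contra hbG
      have : G ∈ S := ⟨hGfil, hPG haP, hbG⟩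
      have hGP : G = P := (hPm.eq_of_le this hPG).symm
      refine hx ?_
      rw [← hGP]
      exact ⟨⊤, hPfil.1, by simp⟩
    obtain ⟨p, hp, hle⟩ := hbG
    exact hPfil.2.1 p hp (x ⇨ b) (le_himp_iff.mpr hle)
  refine ⟨P, ⟨hPfil, ?_, ?_⟩, haP, hbP⟩
  · intro h; rw [h] at hbP; exact hbP (mem_univ b)
  · intro G hGfil hPG
    by_cases hGP : G = P
    · exact Or.inl hGP
    · refine Or.inr (eq_univ_of_forall fun y => ?_)
      obtain ⟨x, hxG, hxP⟩ : ∃ x, x ∈ G ∧ x ∉ P := by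
        by_contra h
        push_neg at h
        exact hGP (Set.Subset.antisymm h hPG)
      have hxy : x ⇨ y ∈ P := by
        by_contra hxyP
        have h1 : x ⇨ b ∈ P := key x hxP
        have h2 : (x ⇨ y) ⇨ b ∈ P := key _ hxyP
        have h3 : (x ⇨ b) ⊓ ((x ⇨ y) ⇨ b) ∈ P := hPfil.2.2 _ h1 _ h2
        have h4 : (x ⇨ b) ⊓ ((x ⇨ y) ⇨ b) = b := by
          rw [← sup_himp_distrib, gba_sup_himp_top, top_himp]
        rw [h4] at h3; exact hbP h3
      have : x ⊓ (x ⇨ y) ∈ G := hGfil.2.2 x hxG _ (hPG hxy)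
      exact hGfil.2.1 _ this y (by simp [inf_himp])

/-- Maximal filter separation: if `a ≰ b` then some maximal filter contains `a` but not `b`;
consequently the Stone map `σ` is injective. -/
theorem stmt11 {A : Type*} [GenBoolAlg A] :
    (∀ a b : A, ¬ a ≤ b → ∃ P : Set A, IsMaxGBAFilter P ∧ a ∈ P ∧ b ∉ P) ∧
    Function.Injective (fun a : A => {P : Set A | IsMaxGBAFilter P ∧ a ∈ P}) := by
  refine ⟨fun a b => gba_separation a b, fun a b hab => ?_⟩
  simp only [Set.ext_iff, mem_setOf_eq] at hab
  by_contra hne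
  rcases (not_and_or.mp fun h : a ≤ b ∧ b ≤ a => hne (le_antisymm h.1 h.2)) with h | h
  · obtain ⟨P, hP, haP, hbP⟩ := gba_separation a b h
    exact hbP ((hab P).mp ⟨hP, haP⟩).2
  · obtain ⟨P, hP, hbP, haP⟩ := gba_separation b a h
    exact haP ((hab P).mpr ⟨hP, hbP⟩).2
end

section
/- Let A be a generalized Boolean algebra and let K_A := {(σ(a))ᶜ : a ∈ A}, where σ(a) = {P ∈ Ul(A) : a ∈ P} and complements are taken in Ul(A). Then K_A is a basis for a topology τ on Ul(A), and the pair (Ul(A), K_A), with Ul(A) equipped with τ, is a generalized Stone space; that is: (S1) for all distinct maximal filters P ≠ Q there exists U ∈ K_A with P ∈ U and Q ∉ U; (S2) every element of K_A is compact in τ; (S3) A ∩ Bᶜ ∈ K_A for all A, B ∈ K_A; (S4) A ∪ B ∈ K_A for all A, B ∈ K_A; (S5) for every τ-closed subset Y of Ul(A) and every nonempty downward-directed subfamily I of K_A, if Y ∩ U ≠ ∅ for each U ∈ I, then Y ∩ ⋂I ≠ ∅. -/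
open Set

open TopologicalSpace

/-- The set of maximal filters of `A`. -/
def Ul (A : Type*) [GenBoolAlg A] : Type _ := {F : Set A // IsMaxGBAFilter F}

/-- The Stone map `σ(a) = {P ∈ Ul(A) : a ∈ P}`. -/
def sigmaMap {A : Type*} [GenBoolAlg A] (a : A) : Set (Ul A) := {P : Ul A | a ∈ P.1}

/-- The family `K_A = {(σ a)ᶜ : a ∈ A}` of subsets of `Ul(A)`. -/
def KA (A : Type*) [GenBoolAlg A] : Set (Set (Ul A)) :=
  Set.range fun a : A => (sigmaMap a)ᶜ

/-- The topology on `Ul(A)` generated by the basis `K_A`. -/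
instance (A : Type*) [GenBoolAlg A] : TopologicalSpace (Ul A) :=
  generateFrom (KA A)

/-!
A maximal filter `P` is prime: if `a ∉ P`, maximality applied to `{x | a ⇨ x ∈ P}` forces
`a ⇨ b ∈ P` for all `b`. Conversely `a ⊔ (a ⇨ b) = ⊤` makes every proper prime filter maximal, so
the prime ideal theorem for distributive lattices supplies maximal filters avoiding any given
element. Consequently `σ` turns `⊓`, `⊔`, `⇨` into `∩`, `∪`, `ᶜ ∪`, which gives the closure
properties of `K_A`. By Alexander's subbasis theorem, compactness of `(σ a)ᶜ` amounts to: if every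
maximal filter omitting `a` omits some `b ∈ S`, then `a` lies above a finite meet of elements of
`S`, i.e. in the filter generated by `S`. Each `(σ a)ᶜ` is also closed, since `σ b` is the union of
the basic sets `(σ (b ⇨ c))ᶜ`; so (S5) is Cantor's intersection theorem.
-/

theorem GenBoolAlg.sup_himp_eq_top {A : Type*} [GenBoolAlg A] (a b : A) : a ⊔ (a ⇨ b) = ⊤ := by
  rw [GenBoolAlg.sup_eq_himp_himp, himp_idem, himp_self]

namespace IsGBAFilter

variable {A : Type*} [GenBoolAlg A] {F : Set A} {a b : A}

theorem mem_of_le (hF : IsGBAFilter F) (ha : a ∈ F) (hab : a ≤ b) : b ∈ F :=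
  hF.2.1 a ha b hab

theorem inf_mem (hF : IsGBAFilter F) (ha : a ∈ F) (hb : b ∈ F) : a ⊓ b ∈ F :=
  hF.2.2 a ha b hb

theorem mem_of_himp_mem (hF : IsGBAFilter F) (ha : a ∈ F) (hab : a ⇨ b ∈ F) : b ∈ F :=
  hF.mem_of_le (hF.inf_mem ha hab) inf_himp_le

theorem finset_inf_mem (hF : IsGBAFilter F) {T : Finset A} (hT : ∀ b ∈ T, b ∈ F) :
    T.inf id ∈ F :=
  Finset.inf_mem F hF.1 (fun _ hx _ hy => hF.inf_mem hx hy) T id hT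

theorem himp_preimage (hF : IsGBAFilter F) (a : A) : IsGBAFilter {x | a ⇨ x ∈ F} :=
  ⟨by simpa using hF.1, fun _ hx _ hxy => hF.mem_of_le hx (himp_le_himp_left hxy),
    fun _ hx _ hy => by simpa [himp_inf_distrib] using hF.inf_mem hx hy⟩

theorem isPFilter (hF : IsGBAFilter F) : Order.IsPFilter F :=
  .of_def ⟨⊤, hF.1⟩ (fun x hx y hy => ⟨x ⊓ y, hF.inf_mem hx hy, inf_le_left, inf_le_right⟩)
    fun hxy hx => hF.mem_of_le hx hxy

theorem of_finset_inf_le (S : Set A) :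
    IsGBAFilter {x | ∃ T : Finset A, ↑T ⊆ S ∧ T.inf id ≤ x} := by
  classical
  refine ⟨⟨∅, by simp⟩, fun x ⟨T, hTS, hT⟩ y hxy => ⟨T, hTS, hT.trans hxy⟩, ?_⟩
  rintro x ⟨T, hTS, hT⟩ y ⟨T', hTS', hT'⟩
  refine ⟨T ∪ T', by simpa using union_subset hTS hTS', ?_⟩
  rw [Finset.inf_union]
  exact inf_le_inf hT hT'

end IsGBAFilter

namespace IsMaxGBAFilter

variable {A : Type*} [GenBoolAlg A] {P : Set A} {a b : A}

theorem himp_mem_of_notMem (hP : IsMaxGBAFilter P) (ha : a ∉ P) (b : A) : a ⇨ b ∈ P := by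
  rcases hP.2.2 _ (hP.1.himp_preimage a) (fun x hx => hP.1.mem_of_le hx le_himp) with h | h
  · exact absurd (h ▸ show a ⇨ a ∈ P by simpa using hP.1.1) ha
  · exact (h ▸ mem_univ b : b ∈ {x | a ⇨ x ∈ P})

theorem mem_or_mem_of_sup_mem (hP : IsMaxGBAFilter P) (h : a ⊔ b ∈ P) : a ∈ P ∨ b ∈ P :=
  or_iff_not_imp_left.mpr fun ha => hP.1.mem_of_himp_mem (hP.himp_mem_of_notMem ha b)
    (hP.1.mem_of_le h (sup_le le_himp_himp le_himp))

theorem of_mem_or_mem (hP : IsGBAFilter P) (hne : P ≠ univ)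
    (hprime : ∀ a b, a ⊔ b ∈ P → a ∈ P ∨ b ∈ P) : IsMaxGBAFilter P := by
  refine ⟨hP, hne, fun G hG hPG => ?_⟩
  by_cases hGP : G ⊆ P
  · exact .inl (hGP.antisymm hPG)
  obtain ⟨g, hgG, hgP⟩ := not_subset.mp hGP
  refine .inr (eq_univ_of_forall fun x => hG.mem_of_himp_mem hgG (hPG ?_))
  exact (hprime g _ (GenBoolAlg.sup_himp_eq_top g x ▸ hP.1)).resolve_left hgP

theorem eq_of_subset {Q : Set A} (hP : IsMaxGBAFilter P) (hQ : IsMaxGBAFilter Q) (h : P ⊆ Q) :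
    P = Q :=
  ((hP.2.2 Q hQ.1 h).resolve_right hQ.2.1).symm

end IsMaxGBAFilter

/-- The complement of a prime ideal containing `a` and disjoint from `F`. -/
theorem IsGBAFilter.exists_isMaxGBAFilter_notMem {A : Type*} [GenBoolAlg A] {F : Set A}
    (hF : IsGBAFilter F) {a : A} (ha : a ∉ F) :
    ∃ M, IsMaxGBAFilter M ∧ F ⊆ M ∧ a ∉ M := by
  obtain ⟨J, hJ, haJ, hFJ⟩ := DistribLattice.prime_ideal_of_disjoint_filter_ideal
    (F := hF.isPFilter.toPFilter) (I := Order.Ideal.principal a)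
    (disjoint_left.mpr fun x hx hxa => ha (hF.mem_of_le hx hxa))
  have haJ : a ∈ J := haJ Order.Ideal.mem_principal_self
  refine ⟨(J : Set A)ᶜ, .of_mem_or_mem ⟨disjoint_left.mp hFJ hF.1, ?_, ?_⟩ ?_ ?_,
    fun x hx => disjoint_left.mp hFJ hx, not_not.mpr haJ⟩
  · exact fun x hx y hxy hy => hx (J.lower hxy hy)
  · exact fun x hx y hy h => (hJ.mem_or_mem h).elim hx hy
  · exact fun h => (h ▸ mem_univ a : a ∈ (J : Set A)ᶜ) haJ
  · exact fun x y h => not_and_or.mp fun ⟨hx, hy⟩ => h (Order.Ideal.sup_mem hx hy)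

namespace Ul

variable {A : Type*} [GenBoolAlg A]

theorem exists_notMem (P : Ul A) : ∃ a, a ∉ P.1 :=
  (ne_univ_iff_exists_notMem _).mp P.2.2.1

theorem exists_mem_notMem_of_ne {P Q : Ul A} (h : P ≠ Q) : ∃ a, a ∈ Q.1 ∧ a ∉ P.1 :=
  not_subset.mp fun hQP => h (Subtype.ext (Q.2.eq_of_subset P.2 hQP).symm)

end Ul

section sigmaMap

variable {A : Type*} [GenBoolAlg A]

theorem sigmaMap_inf (a b : A) : sigmaMap (a ⊓ b) = sigmaMap a ∩ sigmaMap b :=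
  ext fun P => ⟨fun h => ⟨P.2.1.mem_of_le h inf_le_left, P.2.1.mem_of_le h inf_le_right⟩,
    fun h => P.2.1.inf_mem h.1 h.2⟩

theorem sigmaMap_sup (a b : A) : sigmaMap (a ⊔ b) = sigmaMap a ∪ sigmaMap b :=
  ext fun P => ⟨P.2.mem_or_mem_of_sup_mem,
    fun h => h.elim (P.2.1.mem_of_le · le_sup_left) (P.2.1.mem_of_le · le_sup_right)⟩

theorem sigmaMap_himp (a b : A) : sigmaMap (a ⇨ b) = (sigmaMap a)ᶜ ∪ sigmaMap b :=
  ext fun P => ⟨fun h => or_iff_not_imp_left.mpr fun ha => P.2.1.mem_of_himp_mem (not_not.mp ha) h,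
    fun h => h.elim (P.2.himp_mem_of_notMem · b) (P.2.1.mem_of_le · le_himp)⟩

theorem inter_mem_KA {U V : Set (Ul A)} (hU : U ∈ KA A) (hV : V ∈ KA A) : U ∩ V ∈ KA A := by
  obtain ⟨a, rfl⟩ := hU
  obtain ⟨b, rfl⟩ := hV
  exact ⟨a ⊔ b, by simp only [sigmaMap_sup, compl_union]⟩

theorem union_mem_KA {U V : Set (Ul A)} (hU : U ∈ KA A) (hV : V ∈ KA A) : U ∪ V ∈ KA A := by
  obtain ⟨a, rfl⟩ := hU
  obtain ⟨b, rfl⟩ := hV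
  exact ⟨a ⊓ b, by simp only [sigmaMap_inf, compl_inter]⟩

theorem inter_compl_mem_KA {U V : Set (Ul A)} (hU : U ∈ KA A) (hV : V ∈ KA A) :
    U ∩ Vᶜ ∈ KA A := by
  obtain ⟨a, rfl⟩ := hU
  obtain ⟨b, rfl⟩ := hV
  exact ⟨b ⇨ a, by simp only [sigmaMap_himp, compl_union, compl_compl, inter_comm]⟩

theorem isTopologicalBasis_KA : IsTopologicalBasis (KA A) :=
  ⟨fun _ hU _ hV _ hx => ⟨_, inter_mem_KA hU hV, hx, subset_rfl⟩,
    eq_univ_of_forall fun P => (P.exists_notMem).elim fun a ha => ⟨_, ⟨a, rfl⟩, ha⟩, rfl⟩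

theorem sigmaMap_eq_iUnion (b : A) : sigmaMap b = ⋃ c, (sigmaMap (b ⇨ c))ᶜ := by
  ext P
  simp only [sigmaMap_himp, mem_iUnion, compl_union, compl_compl, mem_inter_iff, mem_compl_iff,
    exists_and_left]
  exact ⟨fun h => ⟨h, P.exists_notMem⟩, And.left⟩

theorem isClosed_of_mem_KA {U : Set (Ul A)} (hU : U ∈ KA A) : IsClosed U := by
  obtain ⟨b, rfl⟩ := hU
  rw [isClosed_compl_iff, sigmaMap_eq_iUnion]
  exact isOpen_iUnion fun c => isTopologicalBasis_KA.isOpen ⟨b ⇨ c, rfl⟩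

end sigmaMap
theorem exists_finset_inf_le_of_forall_ul {A : Type*} [GenBoolAlg A] {a : A} {S : Set A}
    (h : ∀ P : Ul A, a ∉ P.1 → ∃ b ∈ S, b ∉ P.1) : ∃ T : Finset A, ↑T ⊆ S ∧ T.inf id ≤ a := by
  by_contra hT
  obtain ⟨M, hM, hSM, haM⟩ := (IsGBAFilter.of_finset_inf_le S).exists_isMaxGBAFilter_notMem hT
  obtain ⟨b, hbS, hbM⟩ := h ⟨M, hM⟩ haM
  exact hbM (hSM ⟨{b}, by simpa using hbS, by simp⟩)

theorem isCompact_of_mem_KA {A : Type*} [GenBoolAlg A] {U : Set (Ul A)} (hU : U ∈ KA A) :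
    IsCompact U := by
  obtain ⟨a, rfl⟩ := hU
  refine isCompact_generateFrom rfl fun 𝒰 h𝒰 hcov => ?_
  obtain ⟨T, hT𝒰, hTa⟩ := exists_finset_inf_le_of_forall_ul (a := a)
    (S := {b | (sigmaMap b)ᶜ ∈ 𝒰}) fun P hP => by
      obtain ⟨V, hV𝒰, hPV⟩ := hcov hP
      obtain ⟨b, rfl⟩ := h𝒰 hV𝒰
      exact ⟨b, hV𝒰, hPV⟩
  refine ⟨(fun b => (sigmaMap b)ᶜ) '' T, image_subset_iff.mpr hT𝒰, T.finite_toSet.image _,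
    fun P hP => ?_⟩
  obtain ⟨b, hbT, hbP⟩ : ∃ b ∈ T, b ∉ P.1 := by
    by_contra! hT
    exact hP (P.2.1.mem_of_le (P.2.1.finset_inf_mem hT) hTa)
  exact ⟨_, mem_image_of_mem _ hbT, hbP⟩

theorem IsClosed.inter_sInter_nonempty_of_dirDown {X : Type*} [TopologicalSpace X] {Y : Set X}
    (hY : IsClosed Y) {I : Set (Set X)} (hI : I.Nonempty) (hdir : DirDown I)
    (hcomp : ∀ U ∈ I, IsCompact U) (hcl : ∀ U ∈ I, IsClosed U)
    (hYI : ∀ U ∈ I, (Y ∩ U).Nonempty) : (Y ∩ ⋂₀ I).Nonempty := by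
  have : Nonempty I := hI.to_subtype
  have hdir' : Directed (· ⊇ ·) fun U : I => Y ∩ U := fun U V => by
    obtain ⟨W, hW, hWUV⟩ := hdir U U.2 V V.2
    exact ⟨⟨W, hW⟩, inter_subset_inter_right Y (hWUV.trans inter_subset_left),
      inter_subset_inter_right Y (hWUV.trans inter_subset_right)⟩
  obtain ⟨x, hx⟩ := IsCompact.nonempty_iInter_of_directed_nonempty_isCompact_isClosed _ hdir'
    (fun U => hYI U U.2) (fun U => (hcomp U U.2).inter_left hY) (fun U => hY.inter (hcl U U.2))
  obtain ⟨U₀, hU₀⟩ := hI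
  exact ⟨x, (mem_iInter.mp hx ⟨U₀, hU₀⟩).1, fun U hU => (mem_iInter.mp hx ⟨U, hU⟩).2⟩

/-- `(Ul(A), K_A)` is a generalized Stone space: `K_A` is a basis of compact sets for the
generated topology, separates points, is closed under `A ∩ Bᶜ` and `A ∪ B`, and satisfies
the directed-intersection condition. -/
theorem stmt13 (A : Type*) [GenBoolAlg A] : IsGenStone (KA A) := by
  refine ⟨fun P Q hPQ => ?_, isTopologicalBasis_KA, fun _ => isCompact_of_mem_KA,
    fun _ hU _ hV => inter_compl_mem_KA hU hV, fun _ hU _ hV => union_mem_KA hU hV,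
    fun Y hY I hIK hI hdir => hY.inter_sInter_nonempty_of_dirDown hI hdir
      (fun _ hU => isCompact_of_mem_KA (hIK hU)) (fun _ hU => isClosed_of_mem_KA (hIK hU))⟩
  obtain ⟨a, haQ, haP⟩ := Ul.exists_mem_notMem_of_ne hPQ
  exact ⟨_, ⟨a, rfl⟩, haP, not_not.mpr haQ⟩
end

section
/- Let A be a generalized Boolean algebra and let σ(a) = {P ∈ Ul(A) : a ∈ P}. Then σ is an isomorphism from A onto the dual generalized Boolean algebra D_{K_A}(Ul(A)) = {σ(a) : a ∈ A}; that is, σ is a bijection from A onto {σ(a) : a ∈ A} satisfying σ(⊤) = Ul(A), σ(a ⊓ b) = σ(a) ∩ σ(b), σ(a ⊔ b) = σ(a) ∪ σ(b), and σ(a ⇨ b) = (σ(a))ᶜ ∪ σ(b), where complements are taken in Ul(A). -/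
open Set

section Aux

variable {A : Type*} [GenBoolAlg A]

/-- `g ⊔ (g ⇨ y) = ⊤` in a generalized Boolean algebra. -/
lemma gba_sup_himp_top_s14 (g y : A) : g ⊔ (g ⇨ y) = ⊤ := by
  have h : g ⇨ (g ⇨ y) = g ⇨ y := by rw [himp_himp, inf_idem]
  rw [GenBoolAlg.sup_eq_himp_himp, h, himp_self]

/-- The filter generated by a filter `F` and an element `a`. -/
def genF (F : Set A) (a : A) : Set A := {z | ∃ f ∈ F, f ⊓ a ≤ z}

lemma genF_filter {F : Set A} (hF : IsGBAFilter F) (a : A) : IsGBAFilter (genF F a) := by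
  refine ⟨⟨⊤, hF.1, le_top⟩, ?_, ?_⟩
  · rintro x ⟨f, hf, hfx⟩ y hxy
    exact ⟨f, hf, hfx.trans hxy⟩
  · rintro x ⟨f, hf, hfx⟩ y ⟨g, hg, hgy⟩
    exact ⟨f ⊓ g, hF.2.2 f hf g hg,
      le_inf ((inf_le_inf_right a inf_le_left).trans hfx)
        ((inf_le_inf_right a inf_le_right).trans hgy)⟩

lemma subset_genF {F : Set A} (_hF : IsGBAFilter F) (a : A) : F ⊆ genF F a :=
  fun x hx => ⟨x, hx, inf_le_left⟩

lemma mem_genF {F : Set A} (hF : IsGBAFilter F) (a : A) : a ∈ genF F a :=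
  ⟨⊤, hF.1, by simp⟩

/-- A prime proper filter is a maximal filter. -/
lemma max_of_prime {F : Set A} (hF : IsGBAFilter F) (hne : F ≠ Set.univ)
    (hprime : ∀ x y : A, x ⊔ y ∈ F → x ∈ F ∨ y ∈ F) : IsMaxGBAFilter F := by
  refine ⟨hF, hne, fun G hG hFG => ?_⟩
  by_cases hGF : G ⊆ F
  · exact Or.inl (le_antisymm hGF hFG)
  · right
    obtain ⟨g, hgG, hgF⟩ := Set.not_subset.1 hGF
    ext x
    simp only [Set.mem_univ, iff_true]
    have htop : g ⊔ (g ⇨ (g ⊓ x)) ∈ F := by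
      rw [gba_sup_himp_top_s14]; exact hF.1
    rcases hprime _ _ htop with h | h
    · exact absurd h hgF
    · have h1 : g ⊓ (g ⇨ (g ⊓ x)) ∈ G := hG.2.2 g hgG _ (hFG h)
      exact hG.2.1 _ h1 x (inf_himp_le.trans inf_le_right)

/-- Key extension lemma: if `¬ a ≤ b` there is a maximal filter containing `a`
but not `b`. -/
lemma exists_max_filter {a b : A} (hab : ¬ a ≤ b) :
    ∃ F : Set A, IsMaxGBAFilter F ∧ a ∈ F ∧ b ∉ F := by
  set S : Set (Set A) := {F | IsGBAFilter F ∧ a ∈ F ∧ b ∉ F} with hS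
  have hup : IsGBAFilter {x : A | a ≤ x} :=
    ⟨le_top, fun x hx y hxy => hx.trans hxy, fun x hx y hy => le_inf hx hy⟩
  have hx0 : {x : A | a ≤ x} ∈ S := ⟨hup, le_refl a, hab⟩
  have hub : ∀ c ⊆ S, IsChain (· ⊆ ·) c → c.Nonempty → ∃ ub ∈ S, ∀ s ∈ c, s ⊆ ub := by
    intro c hcS hchain hcne
    refine ⟨⋃₀ c, ⟨⟨?_, ?_, ?_⟩, ?_, ?_⟩, fun s hs => Set.subset_sUnion_of_mem hs⟩
    · obtain ⟨t, ht⟩ := hcne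
      exact ⟨t, ht, (hcS ht).1.1⟩
    · rintro x ⟨t, ht, hxt⟩ y hxy
      exact ⟨t, ht, (hcS ht).1.2.1 x hxt y hxy⟩
    · rintro x ⟨t, ht, hxt⟩ y ⟨u, hu, hyu⟩
      rcases hchain.total ht hu with h | h
      · exact ⟨u, hu, (hcS hu).1.2.2 x (h hxt) y hyu⟩
      · exact ⟨t, ht, (hcS ht).1.2.2 x hxt y (h hyu)⟩
    · obtain ⟨t, ht⟩ := hcne
      exact ⟨t, ht, (hcS ht).2.1⟩
    · rintro ⟨t, ht, hbt⟩
      exact (hcS ht).2.2 hbt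
  obtain ⟨F, -, hFS, hFmax⟩ := zorn_subset_nonempty S hub _ hx0
  · obtain ⟨hF, haF, hbF⟩ := hFS
    have hprime : ∀ x y : A, x ⊔ y ∈ F → x ∈ F ∨ y ∈ F := by
      intro x y hxy
      by_contra h
      push_neg at h
      obtain ⟨hxF, hyF⟩ := h
      -- the filter generated by F and x must contain b
      have hbx : b ∈ genF F x := by
        by_contra hbx
        have : genF F x ∈ S := ⟨genF_filter hF x, subset_genF hF x haF, hbx⟩
        have := hFmax this (subset_genF hF x)
        exact hxF (this (mem_genF hF x))
      have hby : b ∈ genF F y := by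
        by_contra hby
        have : genF F y ∈ S := ⟨genF_filter hF y, subset_genF hF y haF, hby⟩
        have := hFmax this (subset_genF hF y)
        exact hyF (this (mem_genF hF y))
      obtain ⟨f, hf, hfb⟩ := hbx
      obtain ⟨g, hg, hgb⟩ := hby
      have hmem : (f ⊓ g) ⊓ (x ⊔ y) ∈ F := hF.2.2 _ (hF.2.2 f hf g hg) _ hxy
      have hle : (f ⊓ g) ⊓ (x ⊔ y) ≤ b := by
        rw [inf_sup_left]
        exact sup_le ((inf_le_inf_right x inf_le_left).trans hfb)
          ((inf_le_inf_right y inf_le_right).trans hgb)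
      exact hbF (hF.2.1 _ hmem b hle)
    have hne : F ≠ Set.univ := fun h => hbF (h ▸ Set.mem_univ b)
    exact ⟨F, max_of_prime hF hne hprime, haF, hbF⟩

/-- A maximal filter is prime. -/
lemma max_prime {P : Set A} (hP : IsMaxGBAFilter P) {a b : A} (hab : a ⊔ b ∈ P)
    (ha : a ∉ P) : b ∈ P := by
  have hgen : genF P a = Set.univ := by
    rcases hP.2.2 _ (genF_filter hP.1 a) (subset_genF hP.1 a) with h | h
    · exact absurd (h ▸ mem_genF hP.1 a) ha
    · exact h
  have hb : b ∈ genF P a := hgen ▸ Set.mem_univ b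
  obtain ⟨p, hp, hpb⟩ := hb
  have hmem : p ⊓ (a ⊔ b) ∈ P := hP.1.2.2 p hp _ hab
  have hle : p ⊓ (a ⊔ b) ≤ b := by
    rw [inf_sup_left]
    exact sup_le hpb inf_le_right
  exact hP.1.2.1 _ hmem b hle

end Aux

/-- The Stone map `σ` is an isomorphism from `A` onto the dual generalized Boolean algebra
`D_{K_A}(Ul(A)) = {σ a : a ∈ A}`: it is injective (hence a bijection onto its range, which
is exactly `D_{K_A}(Ul(A))`) and preserves top, meet, join and implication. -/
theorem stmt14 (A : Type*) [GenBoolAlg A] :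
    Function.Injective (sigmaMap (A := A)) ∧
    DK (KA A) = Set.range (sigmaMap (A := A)) ∧
    sigmaMap (⊤ : A) = Set.univ ∧
    (∀ a b : A, sigmaMap (a ⊓ b) = sigmaMap a ∩ sigmaMap b) ∧
    (∀ a b : A, sigmaMap (a ⊔ b) = sigmaMap a ∪ sigmaMap b) ∧
    (∀ a b : A, sigmaMap (a ⇨ b) = (sigmaMap a)ᶜ ∪ sigmaMap b) := by
  refine ⟨?_, ?_, ?_, ?_, ?_, ?_⟩
  · -- injectivity
    intro a b hab
    by_contra hne
    rcases (not_and_or.1 (fun h : a ≤ b ∧ b ≤ a => hne (le_antisymm h.1 h.2))) with h | h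
    · obtain ⟨F, hF, haF, hbF⟩ := exists_max_filter h
      have : (⟨F, hF⟩ : Ul A) ∈ sigmaMap a := haF
      rw [hab] at this
      exact hbF this
    · obtain ⟨F, hF, hbF, haF⟩ := exists_max_filter h
      have : (⟨F, hF⟩ : Ul A) ∈ sigmaMap b := hbF
      rw [← hab] at this
      exact haF this
  · -- DK (KA A) = range σ
    ext U
    simp only [DK, KA, Set.mem_setOf_eq, Set.mem_range]
    constructor
    · rintro ⟨a, ha⟩
      exact ⟨a, by rw [← compl_compl U, ← ha, compl_compl]⟩
    · rintro ⟨a, ha⟩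
      exact ⟨a, by rw [← ha]⟩
  · -- top
    ext P
    simp only [sigmaMap, Set.mem_setOf_eq, Set.mem_univ, iff_true]
    exact P.2.1.1
  · -- meet
    intro a b
    ext P
    simp only [sigmaMap, Set.mem_setOf_eq, Set.mem_inter_iff]
    constructor
    · intro h
      exact ⟨P.2.1.2.1 _ h a inf_le_left, P.2.1.2.1 _ h b inf_le_right⟩
    · rintro ⟨ha, hb⟩
      exact P.2.1.2.2 a ha b hb
  · -- join
    intro a b
    ext P
    simp only [sigmaMap, Set.mem_setOf_eq, Set.mem_union]
    constructor
    · intro h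
      by_cases ha : a ∈ P.1
      · exact Or.inl ha
      · exact Or.inr (max_prime P.2 h ha)
    · rintro (h | h)
      · exact P.2.1.2.1 a h _ le_sup_left
      · exact P.2.1.2.1 b h _ le_sup_right
  · -- himp
    intro a b
    ext P
    simp only [sigmaMap, Set.mem_setOf_eq, Set.mem_union, Set.mem_compl_iff]
    constructor
    · intro h
      by_cases ha : a ∈ P.1
      · refine Or.inr (P.2.1.2.1 _ (P.2.1.2.2 _ ha _ h) b ?_)
        exact inf_himp_le
      · exact Or.inl ha
    · rintro (ha | hb)
      · -- a ∉ P : show a ⇨ b ∈ P via genF P a = univ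
        have hgen : genF P.1 a = Set.univ := by
          rcases P.2.2.2 _ (genF_filter P.2.1 a) (subset_genF P.2.1 a) with h | h
          · exact absurd (h ▸ mem_genF P.2.1 a) ha
          · exact h
        have hb : b ∈ genF P.1 a := hgen ▸ Set.mem_univ b
        obtain ⟨p, hp, hpb⟩ := hb
        exact P.2.1.2.1 p hp _ (le_himp_iff.2 hpb)
      · exact P.2.1.2.1 b hb _ le_himp
end

section
/- Let (X, K) be a generalized Stone space and let D_K(X) carry its generalized Boolean algebra structure (meet ∩, join ∪, implication U ⇒ V := Uᶜ ∪ V, top X). Then the map ε : X → Ul(D_K(X)) given by ε(x) = {U ∈ D_K(X) : x ∈ U} is well defined (each ε(x) is a maximal filter of D_K(X)) and is a homeomorphism between the topological space (X, K) and Ul(D_K(X)) equipped with the topology generated by the basis K_{D_K(X)} = {{P ∈ Ul(D_K(X)) : U ∈ P}ᶜ : U ∈ D_K(X)}. -/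
open Set

open TopologicalSpace

/-- A filter of the generalized Boolean algebra `D_K(X)` (with meet `∩`, join `∪`,
implication `U ⇒ V = Uᶜ ∪ V` and top `X`): a subfamily of `D` containing the top element,
upward closed within `D`, and closed under intersections. -/
def IsFilterIn {X : Type*} (D F : Set (Set X)) : Prop :=
  F ⊆ D ∧ Set.univ ∈ F ∧ (∀ U ∈ F, ∀ V ∈ D, U ⊆ V → V ∈ F) ∧
    (∀ U ∈ F, ∀ V ∈ F, U ∩ V ∈ F)

/-- A maximal filter of `D`: a proper filter whose only extensions among filters of `D`
are itself and all of `D`. -/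
def IsMaxFilterIn {X : Type*} (D F : Set (Set X)) : Prop :=
  IsFilterIn D F ∧ F ≠ D ∧ ∀ G : Set (Set X), IsFilterIn D G → F ⊆ G → G = F ∨ G = D

/-- The set `Ul(D)` of maximal filters of `D`. -/
def UlD {X : Type*} (D : Set (Set X)) : Type _ := {F : Set (Set X) // IsMaxFilterIn D F}

/-- The family `K_D = {{P ∈ Ul(D) : U ∈ P}ᶜ : U ∈ D}`. -/
def KofD {X : Type*} (D : Set (Set X)) : Set (Set (UlD D)) :=
  (fun U => ({P : UlD D | U ∈ P.1})ᶜ) '' D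

/-- The topology on `Ul(D)` generated by the basis `K_D`. -/
instance {X : Type*} (D : Set (Set X)) : TopologicalSpace (UlD D) :=
  TopologicalSpace.generateFrom (KofD D)

lemma eps_max {X : Type*} [TopologicalSpace X] {K : Set (Set X)} (hX : IsGenStone K)
    (x : X) : IsMaxFilterIn (DK K) {U | U ∈ DK K ∧ x ∈ U} := by
  obtain ⟨A, hA, hxA⟩ : ∃ A ∈ K, x ∈ A := by
    have h : x ∈ ⋃₀ K := by rw [hX.basis.sUnion_eq]; trivial
    exact h
  have hempty : (∅ : Set X) ∈ K := by
    have := hX.diff_mem A hA A hA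
    simpa using this
  have hunivD : (Set.univ : Set X) ∈ DK K := by
    show (Set.univ : Set X)ᶜ ∈ K
    simpa using hempty
  refine ⟨⟨fun U hU => hU.1, ⟨hunivD, trivial⟩, fun U hU V hV hUV => ⟨hV, hUV hU.2⟩,
    fun U hU V hV => ⟨?_, hU.2, hV.2⟩⟩, ?_, ?_⟩
  · show (U ∩ V)ᶜ ∈ K
    rw [Set.compl_inter]
    exact hX.union_mem _ hU.1 _ hV.1
  · intro h
    have hAc : Aᶜ ∈ DK K := by show Aᶜᶜ ∈ K; rwa [compl_compl]
    rw [← h] at hAc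
    exact hAc.2 hxA
  · intro G hG hsub
    by_cases hGE : G = {U | U ∈ DK K ∧ x ∈ U}
    · exact Or.inl hGE
    right
    obtain ⟨V, hVG, hVne⟩ : ∃ V ∈ G, V ∉ {U | U ∈ DK K ∧ x ∈ U} := by
      by_contra h
      push_neg at h
      exact hGE (Set.Subset.antisymm h hsub)
    have hVD : V ∈ DK K := hG.1 hVG
    have hxV : x ∉ V := fun hx => hVne ⟨hVD, hx⟩
    apply Set.Subset.antisymm hG.1
    intro W hW
    have himp : Vᶜ ∪ W ∈ DK K := by
      show (Vᶜ ∪ W)ᶜ ∈ K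
      rw [Set.compl_union, compl_compl]
      have := hX.diff_mem Wᶜ hW Vᶜ hVD
      rwa [compl_compl, Set.inter_comm] at this
    have himpG : Vᶜ ∪ W ∈ G := hsub ⟨himp, Or.inl hxV⟩
    have hinterG : V ∩ (Vᶜ ∪ W) ∈ G := hG.2.2.2 V hVG _ himpG
    have he : V ∩ (Vᶜ ∪ W) = V ∩ W := by
      rw [Set.inter_union_distrib_left]; simp
    rw [he] at hinterG
    exact hG.2.2.1 _ hinterG W hW Set.inter_subset_right

lemma eps_surj {X : Type*} [TopologicalSpace X] {K : Set (Set X)} (hX : IsGenStone K)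
    (P : Set (Set X)) (hP : IsMaxFilterIn (DK K) P) :
    ∃ x : X, P = {U | U ∈ DK K ∧ x ∈ U} := by
  obtain ⟨⟨hPD, hPtop, hPup, hPint⟩, hPne, hPmax⟩ := hP
  obtain ⟨W, hWD, hWP⟩ : ∃ W ∈ DK K, W ∉ P := by
    by_contra h
    push_neg at h
    exact hPne (Set.Subset.antisymm hPD h)
  set I : Set (Set X) := (fun U => Wᶜ ∩ U) '' P with hI
  have hIK : I ⊆ K := by
    rintro _ ⟨U, hU, rfl⟩
    have := hX.diff_mem Wᶜ hWD Uᶜ (hPD hU)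
    rwa [compl_compl] at this
  have hIne : I.Nonempty := ⟨_, ⟨Set.univ, hPtop, rfl⟩⟩
  have hdir : DirDown I := by
    rintro _ ⟨U, hU, rfl⟩ _ ⟨V, hV, rfl⟩
    refine ⟨Wᶜ ∩ (U ∩ V), ⟨U ∩ V, hPint U hU V hV, rfl⟩, ?_⟩
    intro z hz
    exact ⟨⟨hz.1, hz.2.1⟩, hz.1, hz.2.2⟩
  have hmeet : ∀ U ∈ I, ((Set.univ : Set X) ∩ U).Nonempty := by
    rintro _ ⟨U, hU, rfl⟩
    rw [Set.univ_inter]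
    by_contra hemp
    rw [Set.not_nonempty_iff_eq_empty] at hemp
    have hsub : U ⊆ W := by
      intro z hz
      by_contra hzW
      rw [Set.eq_empty_iff_forall_notMem] at hemp
      exact hemp z ⟨hzW, hz⟩
    exact hWP (hPup U hU W hWD hsub)
  obtain ⟨x, hx⟩ := hX.dir_inter Set.univ isClosed_univ I hIK hIne hdir hmeet
  have hsub : P ⊆ {U | U ∈ DK K ∧ x ∈ U} := by
    intro U hU
    exact ⟨hPD hU, (hx.2 _ ⟨U, hU, rfl⟩).2⟩
  rcases hPmax _ (eps_max hX x).1 hsub with h | h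
  · exact ⟨x, h.symm⟩
  · exact absurd h (eps_max hX x).2.1

/-- `ε(x) = {U ∈ D_K(X) : x ∈ U}` is a maximal filter of `D_K(X)` for each `x`, and `ε` is
a homeomorphism from `(X, K)` onto `Ul(D_K(X))` with the topology generated by
`K_{D_K(X)}`. -/
theorem stmt15 {X : Type*} [TopologicalSpace X] {K : Set (Set X)} (hX : IsGenStone K) :
    (∀ x : X, IsMaxFilterIn (DK K) {U | U ∈ DK K ∧ x ∈ U}) ∧
    ∃ e : X ≃ₜ UlD (DK K), ∀ x : X, (e x).1 = {U | U ∈ DK K ∧ x ∈ U} := by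
  classical
  refine ⟨eps_max hX, ?_⟩
  set f : X → UlD (DK K) := fun x => ⟨{U | U ∈ DK K ∧ x ∈ U}, eps_max hX x⟩ with hf
  have hinj : Function.Injective f := by
    intro x y hxy
    by_contra hne
    obtain ⟨U, hU, hxU, hyU⟩ := hX.sep x y hne
    have hval : ({V | V ∈ DK K ∧ x ∈ V} : Set (Set X)) = {V | V ∈ DK K ∧ y ∈ V} :=
      congrArg Subtype.val hxy
    have hUc : Uᶜ ∈ ({V | V ∈ DK K ∧ y ∈ V} : Set (Set X)) :=
      ⟨by show Uᶜᶜ ∈ K; rwa [compl_compl], hyU⟩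
    rw [← hval] at hUc
    exact hUc.2 hxU
  have hsurj : Function.Surjective f := by
    rintro ⟨P, hP⟩
    obtain ⟨x, hx⟩ := eps_surj hX P hP
    exact ⟨x, Subtype.ext hx.symm⟩
  set e0 : X ≃ UlD (DK K) := Equiv.ofBijective f ⟨hinj, hsurj⟩ with he0
  have hcontf : Continuous f := by
    apply continuous_generateFrom_iff.mpr
    rintro _ ⟨U, hU, rfl⟩
    have heq : f ⁻¹' ({P : UlD (DK K) | U ∈ P.1})ᶜ = Uᶜ := by
      ext x
      exact ⟨fun h hxU => h ⟨hU, hxU⟩, fun h hm => h hm.2⟩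
    rw [heq]
    exact hX.basis.isOpen hU
  have hcontg : Continuous (e0.symm : UlD (DK K) → X) := by
    apply hX.basis.continuous_iff.mpr
    intro A hA
    have hAc : Aᶜ ∈ DK K := by show Aᶜᶜ ∈ K; rwa [compl_compl]
    have heq : (e0.symm : UlD (DK K) → X) ⁻¹' A = ({P : UlD (DK K) | Aᶜ ∈ P.1})ᶜ := by
      ext P
      have hP1 : P.1 = {U | U ∈ DK K ∧ e0.symm P ∈ U} := by
        conv_lhs => rw [← e0.apply_symm_apply P]
        rfl
      simp only [Set.mem_preimage, Set.mem_compl_iff, Set.mem_setOf_eq, hP1]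
      constructor
      · intro h hmem
        exact hmem.2 h
      · intro h
        by_contra hA'
        exact h ⟨hAc, hA'⟩
    rw [heq]
    exact TopologicalSpace.isOpen_generateFrom_of_mem ⟨Aᶜ, hAc, rfl⟩
  exact ⟨⟨e0, hcontf, hcontg⟩, fun x => rfl⟩
end

section
/- Let (X, K, R) be a generalized modal space and let α be a formula of Form built from propositional variables, nominals and ⊤ using ∧, ∨, □, ◆. Let V be a valuation that assigns to every propositional variable an element of D_K(X) and to every nominal a singleton subset of X. Then the truth set V(α) is a closed subset of X. -/
open Set TopologicalSpace

/-- Modal formulas built from propositional variables (`P`), nominals (`N`) and `⊤`,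
using `∧`, `∨`, `□` and the backward diamond `◆`. -/
inductive Form (P N : Type*) : Type _ where
  | prop : P → Form P N
  | nom : N → Form P N
  | top : Form P N
  | and : Form P N → Form P N → Form P N
  | or : Form P N → Form P N → Form P N
  | box : Form P N → Form P N
  | bdia : Form P N → Form P N

/-- The truth set of a formula in a model `(X, R, V)`, where `Vp` interprets propositional
variables and `Vn` interprets nominals. -/
def tset {X P N : Type*} (R : X → X → Prop) (Vp : P → Set X) (Vn : N → Set X) :
    Form P N → Set X
  | Form.prop p => Vp p
  | Form.nom n => Vn n
  | Form.top => Set.univ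
  | Form.and a b => tset R Vp Vn a ∩ tset R Vp Vn b
  | Form.or a b => tset R Vp Vn a ∪ tset R Vp Vn b
  | Form.box a => {x | ∀ y, R x y → y ∈ tset R Vp Vn a}
  | Form.bdia a => {x | ∃ y, R y x ∧ y ∈ tset R Vp Vn a}

-- Auxiliary: members of `D_K` are closed.
lemma DK_closed {X : Type*} [TopologicalSpace X] {K : Set (Set X)} (hX : IsGenStone K)
    {U : Set X} (hU : U ∈ DK K) : IsClosed U := by
  have : IsOpen Uᶜ := hX.basis.isOpen hU
  simpa using this.isClosed_compl

-- A closed set is the intersection of its `D_K` supersets.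
lemma closed_eq_sInter {X : Type*} [TopologicalSpace X] {K : Set (Set X)} (hX : IsGenStone K)
    {A : Set X} (hA : IsClosed A) : A = ⋂₀ {U ∈ DK K | A ⊆ U} := by
  apply Set.Subset.antisymm
  · intro x hx U hU
    exact hU.2 hx
  · intro x hx
    by_contra hxA
    obtain ⟨V, hVK, hxV, hVsub⟩ := hX.basis.exists_subset_of_mem_open hxA hA.isOpen_compl
    have hVc : Vᶜ ∈ DK K := by simpa [DK] using hVK
    have : A ⊆ Vᶜ := fun z hz hzV => hVsub hzV hz
    exact hx Vᶜ ⟨hVc, this⟩ hxV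

/-- If a valuation interprets every propositional variable by an element of `D_K(X)` and
every nominal by a singleton, then the truth set of every formula is closed. -/
theorem stmt16 {X P N : Type*} [TopologicalSpace X] {K : Set (Set X)} {R : X → X → Prop}
    (hX : IsGenModal K R) (Vp : P → Set X) (Vn : N → Set X)
    (hVp : ∀ p, Vp p ∈ DK K) (hVn : ∀ n, ∃ x : X, Vn n = {x})
    (α : Form P N) : IsClosed (tset R Vp Vn α) := by
  have hS := hX.toIsGenStone
  induction α with
  | prop p => exact DK_closed hS (hVp p)
  | nom n =>
      obtain ⟨x, hx⟩ := hVn n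
      simp only [tset]
      rw [hx]
      rw [← isOpen_compl_iff]
      apply isOpen_iff_forall_mem_open.mpr
      intro y hy
      obtain ⟨U, hUK, hyU, hxU⟩ := hS.sep y x (by simpa using hy)
      exact ⟨U, fun z hz => by simp; intro h; exact hxU (h ▸ hz), hS.basis.isOpen hUK, hyU⟩
  | top => exact isClosed_univ
  | and a b iha ihb => exact iha.inter ihb
  | or a b iha ihb => exact iha.union ihb
  | box a iha =>
      have key : tset R Vp Vn (Form.box a)
          = ⋂₀ ((fun U => {x : X | ∀ y, R x y → y ∈ U}) '' {U ∈ DK K | tset R Vp Vn a ⊆ U}) := by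
        ext x
        simp only [tset, Set.mem_sInter, Set.mem_image, Set.mem_setOf_eq]
        constructor
        · rintro h S ⟨U, hU, rfl⟩ y hy
          exact hU.2 (h y hy)
        · intro h y hy
          have := closed_eq_sInter hS iha
          rw [this]
          intro U hU
          exact h _ ⟨U, hU, rfl⟩ y hy
      rw [key]
      apply isClosed_sInter
      rintro S ⟨U, hU, rfl⟩
      exact DK_closed hS (hX.box_mem U hU.1)
  | bdia a iha =>
      -- show the closure is contained in the set
      set A := tset R Vp Vn a with hAdef
      apply isClosed_of_closure_subset
      intro x hx
      -- the backward diamond set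
      -- define forward diamond of open sets
      set dia : Set X → Set X := fun V => {z | ∃ w, R z w ∧ w ∈ V} with hdia
      have hdiaK : ∀ V ∈ K, dia V ∈ K := by
        intro V hV
        have hVc : Vᶜ ∈ DK K := by simpa [DK] using hV
        have := hX.box_mem Vᶜ hVc
        have heq : dia V = {z : X | ∀ y, R z y → y ∈ Vᶜ}ᶜ := by
          ext z
          simp [hdia, not_forall]
        rw [heq]
        simpa [DK] using this
      set I : Set (Set X) := {S | ∃ V ∈ K, x ∈ V ∧ S = dia V} with hI
      have hIK : I ⊆ K := by rintro S ⟨V, hVK, _, rfl⟩; exact hdiaK V hVK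
      have hxU : ∃ V ∈ K, x ∈ V := by
        obtain ⟨V, hVK, hxV, _⟩ := hS.basis.exists_subset_of_mem_open (Set.mem_univ x) isOpen_univ
        exact ⟨V, hVK, hxV⟩
      obtain ⟨V₀, hV₀K, hxV₀⟩ := hxU
      have hIne : I.Nonempty := ⟨dia V₀, V₀, hV₀K, hxV₀, rfl⟩
      have hIdir : DirDown I := by
        rintro S ⟨V₁, hV₁, hx₁, rfl⟩ T ⟨V₂, hV₂, hx₂, rfl⟩
        obtain ⟨W, hWK, hxW, hWsub⟩ := hS.basis.exists_subset_inter V₁ hV₁ V₂ hV₂ x ⟨hx₁, hx₂⟩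
        refine ⟨dia W, ⟨W, hWK, hxW, rfl⟩, ?_⟩
        rintro z ⟨w, hzw, hwW⟩
        exact ⟨⟨w, hzw, (hWsub hwW).1⟩, ⟨w, hzw, (hWsub hwW).2⟩⟩
      have hmeets : ∀ U ∈ I, ((A : Set X) ∩ U).Nonempty := by
        rintro S ⟨V, hVK, hxV, rfl⟩
        have hVopen := hS.basis.isOpen hVK
        obtain ⟨z, hzV, hzbd⟩ := mem_closure_iff.mp hx V hVopen hxV
        obtain ⟨y, hyz, hya⟩ := hzbd
        exact ⟨y, hya, z, hyz, hzV⟩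
      obtain ⟨y, hyA, hyI⟩ := hS.dir_inter A iha I hIK hIne hIdir hmeets
      refine ⟨y, ?_, hyA⟩
      -- show R y x
      by_contra hR
      have hclosed := hX.closed_succ y
      obtain ⟨V, hVK, hxV, hVsub⟩ := hS.basis.exists_subset_of_mem_open (by exact hR)
        hclosed.isOpen_compl
      have : y ∈ dia V := hyI (dia V) ⟨V, hVK, hxV, rfl⟩
      obtain ⟨w, hyw, hwV⟩ := this
      exact hVsub hwV hyw
end

section
/- Let (X, K, R) be a generalized modal space, let α be a formula of Form, and let p be a fixed propositional variable. Let V be a valuation that assigns to every propositional variable other than p an element of D_K(X) and to every nominal a singleton subset of X. Let {Z_i : i ∈ I} be a nonempty downward-directed family of closed subsets of X. Then ⋂{V[p ↦ Z_i](α) : i ∈ I} = V[p ↦ ⋂{Z_i : i ∈ I}](α), where V[p ↦ Z] denotes the valuation agreeing with V except that it assigns Z to p. -/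
open Set TopologicalSpace

section Auxiliary

variable {X : Type*} [TopologicalSpace X] {K : Set (Set X)} {R : X → X → Prop}

/-- The box operation on sets. -/
abbrev boxS (R : X → X → Prop) (A : Set X) : Set X := {x | ∀ y, R x y → y ∈ A}

/-- The backward diamond operation on sets. -/
abbrev bdiaS (R : X → X → Prop) (A : Set X) : Set X := {x | ∃ y, R y x ∧ y ∈ A}

/-- The forward diamond operation on sets. -/
abbrev fdiaS (R : X → X → Prop) (A : Set X) : Set X := {x | ∃ y, R x y ∧ y ∈ A}

lemma K_open (h : IsGenStone K) {U : Set X} (hU : U ∈ K) : IsOpen U :=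
  h.basis.isOpen hU

lemma DK_closed_s17 (h : IsGenStone K) {D : Set X} (hD : D ∈ DK K) : IsClosed D := by
  rw [← isOpen_compl_iff]; exact K_open h hD

lemma K_inter_s17 (h : IsGenStone K) {U V : Set X} (hU : U ∈ K) (hV : V ∈ K) : U ∩ V ∈ K := by
  have h1 := h.diff_mem U hU V hV
  have h2 := h.diff_mem U hU _ h1
  have he : U ∩ (U ∩ Vᶜ)ᶜ = U ∩ V := by ext z; simp; tauto
  rwa [he] at h2

lemma singleton_closed (h : IsGenStone K) (x : X) : IsClosed ({x} : Set X) := by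
  rw [← isOpen_compl_iff]
  refine isOpen_iff_forall_mem_open.mpr fun y hy => ?_
  obtain ⟨U, hUK, hyU, hxU⟩ := h.sep y x (by simpa using hy)
  refine ⟨U, fun z hz => ?_, K_open h hUK, hyU⟩
  simp only [mem_compl_iff, mem_singleton_iff]
  rintro rfl; exact hxU hz

lemma exists_K_sep (h : IsGenStone K) {A : Set X} (hA : IsClosed A) {x : X} (hx : x ∉ A) :
    ∃ U ∈ K, x ∈ U ∧ A ∩ U = ∅ := by
  obtain ⟨U, hUK, hxU, hUA⟩ :=
    h.basis.exists_subset_of_mem_open (show x ∈ Aᶜ from hx) hA.isOpen_compl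
  refine ⟨U, hUK, hxU, eq_empty_iff_forall_notMem.mpr ?_⟩
  rintro z ⟨hzA, hzU⟩
  exact hUA hzU hzA

lemma fdia_K (h : IsGenModal K R) {U : Set X} (hU : U ∈ K) : fdiaS R U ∈ K := by
  have hD : Uᶜ ∈ DK K := by simpa [DK] using hU
  have hb := h.box_mem Uᶜ hD
  have he : ({x : X | ∀ y, R x y → y ∈ Uᶜ})ᶜ = fdiaS R U := by
    ext x
    simp only [mem_compl_iff, mem_setOf_eq, fdiaS]
    push_neg
    simp
  have hb' : ({x : X | ∀ y, R x y → y ∈ Uᶜ})ᶜ ∈ K := hb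
  rwa [he] at hb'

lemma boxS_closed (h : IsGenModal K R) {A : Set X} (hA : IsClosed A) : IsClosed (boxS R A) := by
  have heq : boxS R A = ⋂ D ∈ {D | D ∈ DK K ∧ A ⊆ D}, boxS R D := by
    ext x
    simp only [mem_iInter, mem_setOf_eq]
    constructor
    · rintro hx D ⟨hD, hAD⟩ y hy
      exact hAD (hx y hy)
    · intro hx y hy
      by_contra hyA
      obtain ⟨U, hUK, hyU, hAU⟩ := exists_K_sep h.toIsGenStone hA hyA
      have hADK : Uᶜ ∈ DK K := by simpa [DK] using hUK
      have hAsub : A ⊆ Uᶜ := by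
        intro z hz hzU
        exact absurd hAU (by rw [eq_empty_iff_forall_notMem]; push_neg; exact ⟨z, hz, hzU⟩)
      exact (hx Uᶜ ⟨hADK, hAsub⟩ y hy) hyU
  rw [heq]
  exact isClosed_biInter fun D hD => DK_closed_s17 h.toIsGenStone (h.box_mem D hD.1)

lemma bdiaS_closed (h : IsGenModal K R) {A : Set X} (hA : IsClosed A) :
    IsClosed (bdiaS R A) := by
  rw [← isOpen_compl_iff]
  refine isOpen_iff_forall_mem_open.mpr fun x hx => ?_
  have key : ∃ U ∈ K, x ∈ U ∧ U ∩ bdiaS R A = ∅ := by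
    by_contra hcon
    push_neg at hcon
    set I : Set (Set X) := {B | ∃ U, U ∈ K ∧ x ∈ U ∧ B = fdiaS R U} with hI
    have hIK : I ⊆ K := by rintro B ⟨U, hU, -, rfl⟩; exact fdia_K h hU
    obtain ⟨U₀, hU₀K, hxU₀, -⟩ :=
      h.toIsGenStone.basis.exists_subset_of_mem_open (mem_univ x) isOpen_univ
    have hIne : I.Nonempty := ⟨_, U₀, hU₀K, hxU₀, rfl⟩
    have hdd : DirDown I := by
      rintro B ⟨U, hU, hxU, rfl⟩ C ⟨V, hV, hxV, rfl⟩
      refine ⟨fdiaS R (U ∩ V), ⟨U ∩ V, K_inter_s17 h.toIsGenStone hU hV, ⟨hxU, hxV⟩, rfl⟩, ?_⟩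
      rintro z ⟨y, hy, hyUV⟩
      exact ⟨⟨y, hy, hyUV.1⟩, ⟨y, hy, hyUV.2⟩⟩
    have hmeets : ∀ B ∈ I, (A ∩ B).Nonempty := by
      rintro B ⟨U, hU, hxU, rfl⟩
      obtain ⟨z, hzU, y, hyz, hyA⟩ := (hcon U hU hxU)
      exact ⟨y, hyA, z, hyz, hzU⟩
    obtain ⟨y, hyA, hyI⟩ := h.toIsGenStone.dir_inter A hA I hIK hIne hdd hmeets
    have hRyx : R y x := by
      by_contra hnR
      obtain ⟨U, hU, hxU, hRU⟩ := exists_K_sep h.toIsGenStone (h.closed_succ y) hnR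
      obtain ⟨z, hyz, hzU⟩ := mem_sInter.mp hyI (fdiaS R U) ⟨U, hU, hxU, rfl⟩
      exact absurd hRU
        (by rw [eq_empty_iff_forall_notMem]; push_neg; exact ⟨z, hyz, hzU⟩)
    exact hx ⟨y, hRyx, hyA⟩
  obtain ⟨U, hUK, hxU, hUe⟩ := key
  refine ⟨U, fun z hz hzb => ?_, K_open h.toIsGenStone hUK, hxU⟩
  exact absurd hUe (by rw [eq_empty_iff_forall_notMem]; push_neg; exact ⟨z, hz, hzb⟩)

omit [TopologicalSpace X] in
lemma tset_mono {P N : Type*} (R : X → X → Prop) (Vp Vp' : P → Set X) (Vn : N → Set X)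
    (hV : ∀ q, Vp q ⊆ Vp' q) (α : Form P N) :
    tset R Vp Vn α ⊆ tset R Vp' Vn α := by
  induction α with
  | prop q => exact hV q
  | nom n => exact subset_rfl
  | top => exact subset_rfl
  | and a b iha ihb => exact inter_subset_inter iha ihb
  | or a b iha ihb => exact union_subset_union iha ihb
  | box a iha => intro x hx y hy; exact iha (hx y hy)
  | bdia a iha => rintro x ⟨y, hyx, hy⟩; exact ⟨y, hyx, iha hy⟩

lemma tset_closed {P N : Type*} (h : IsGenModal K R) (Vp : P → Set X) (Vn : N → Set X)
    (hVp : ∀ q, IsClosed (Vp q)) (hVn : ∀ n, ∃ x : X, Vn n = {x}) (α : Form P N) :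
    IsClosed (tset R Vp Vn α) := by
  induction α with
  | prop q => exact hVp q
  | nom n =>
      obtain ⟨x, hx⟩ := hVn n
      show IsClosed (Vn n)
      rw [hx]
      exact singleton_closed h.toIsGenStone x
  | top => exact isClosed_univ
  | and a b iha ihb => exact iha.inter ihb
  | or a b iha ihb => exact iha.union ihb
  | box a iha => exact boxS_closed h iha
  | bdia a iha => exact bdiaS_closed h iha

lemma finset_directed {ι Y : Type*} [Nonempty ι] (A : ι → Set Y)
    (hdir : ∀ i j, ∃ k, A k ⊆ A i ∩ A j) (s : Finset ι) : ∃ k, ∀ i ∈ s, A k ⊆ A i := by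
  classical
  induction s using Finset.induction_on with
  | empty => exact ⟨Classical.arbitrary ι, by simp⟩
  | @insert i s hi ih =>
      obtain ⟨k, hk⟩ := ih
      obtain ⟨m, hm⟩ := hdir i k
      refine ⟨m, fun j hj => ?_⟩
      rcases Finset.mem_insert.mp hj with rfl | hj
      · exact hm.trans inter_subset_left
      · exact (hm.trans inter_subset_right).trans (hk j hj)

end Auxiliary

/-- Truth sets commute with intersections of nonempty downward-directed families of closed
sets substituted for a fixed propositional variable `p`, provided all other propositional
variables take values in `D_K(X)` and nominals take singleton values. -/
theorem stmt17 {X P N : Type*} [TopologicalSpace X] [DecidableEq P]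
    {K : Set (Set X)} {R : X → X → Prop} (hX : IsGenModal K R)
    (α : Form P N) (p : P) (Vp : P → Set X) (Vn : N → Set X)
    (hVp : ∀ q : P, q ≠ p → Vp q ∈ DK K) (hVn : ∀ n, ∃ x : X, Vn n = {x})
    {I : Type*} [Nonempty I] (Z : I → Set X) (hZ : ∀ i, IsClosed (Z i))
    (hdir : ∀ i j : I, ∃ k : I, Z k ⊆ Z i ∩ Z j) :
    ⋂ i, tset R (Function.update Vp p (Z i)) Vn α =
      tset R (Function.update Vp p (⋂ i, Z i)) Vn α := by
  classical
  have hstone := hX.toIsGenStone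
  have hm : ∀ (β : Form P N) (i k : I), Z k ⊆ Z i →
      tset R (Function.update Vp p (Z k)) Vn β ⊆ tset R (Function.update Vp p (Z i)) Vn β := by
    intro β i k hik
    refine tset_mono R _ _ Vn (fun q => ?_) β
    rcases eq_or_ne q p with rfl | hq
    · simpa using hik
    · simp [Function.update_of_ne hq]
  have hclosedi : ∀ (β : Form P N) (i : I),
      IsClosed (tset R (Function.update Vp p (Z i)) Vn β) := by
    intro β i
    refine tset_closed hX _ _ (fun q => ?_) hVn β
    rcases eq_or_ne q p with rfl | hq
    · simpa using hZ i
    · rw [Function.update_of_ne hq]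
      exact DK_closed_s17 hstone (hVp q hq)
  induction α with
  | prop q =>
      simp only [tset]
      rcases eq_or_ne q p with rfl | hq
      · simp
      · simp [Function.update_of_ne hq, iInter_const]
  | nom n => simp only [tset, iInter_const]
  | top => simp only [tset, iInter_const]
  | and a b iha ihb =>
      simp only [tset]
      rw [iInter_inter_distrib, iha, ihb]
  | or a b iha ihb =>
      simp only [tset]
      rw [← iha, ← ihb]
      apply Subset.antisymm
      · intro x hx
        rw [mem_union, mem_iInter, mem_iInter]
        by_contra hc
        push_neg at hc
        obtain ⟨⟨i, hi⟩, ⟨j, hj⟩⟩ := hc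
        obtain ⟨k, hk⟩ := hdir i j
        rcases mem_iInter.mp hx k with hxa | hxb
        · exact hi (hm a i k (hk.trans inter_subset_left) hxa)
        · exact hj (hm b j k (hk.trans inter_subset_right) hxb)
      · rintro x (hx | hx) <;> rw [mem_iInter] <;> intro i
        · exact Or.inl (mem_iInter.mp hx i)
        · exact Or.inr (mem_iInter.mp hx i)
  | box a iha =>
      simp only [tset]
      rw [← iha]
      ext x
      simp only [mem_iInter, mem_setOf_eq]
      exact ⟨fun h y hy i => h i y hy, fun h i y hy => h y hy i⟩
  | bdia a iha =>
      simp only [tset]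
      rw [← iha]
      set A : I → Set X := fun i => tset R (Function.update Vp p (Z i)) Vn a with hA
      have hAcl : ∀ i, IsClosed (A i) := fun i => hclosedi a i
      have hAdir : ∀ i j, ∃ k, A k ⊆ A i ∩ A j := by
        intro i j
        obtain ⟨k, hk⟩ := hdir i j
        exact ⟨k, subset_inter (hm a i k (hk.trans inter_subset_left))
          (hm a j k (hk.trans inter_subset_right))⟩
      apply Subset.antisymm
      · intro x hx
        simp only [mem_iInter, mem_setOf_eq] at hx
        by_contra hxC
        obtain ⟨U, hUK, hxU, hUe⟩ :=
          exists_K_sep hstone (bdiaS_closed hX (isClosed_iInter hAcl))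
            (show x ∉ bdiaS R (⋂ i, A i) from hxC)
        have hCD : (⋂ i, A i) ⊆ boxS R Uᶜ := by
          intro y hy z hyz hzU
          exact absurd hUe
            (by rw [eq_empty_iff_forall_notMem]; push_neg; exact ⟨z, ⟨y, hyz, hy⟩, hzU⟩)
        have hDK : boxS R Uᶜ ∈ DK K := hX.box_mem Uᶜ (by simpa [DK] using hUK)
        have hsK : (boxS R Uᶜ)ᶜ ∈ K := hDK
        have hscomp : IsCompact (boxS R Uᶜ)ᶜ := hstone.compact _ hsK
        have hex : ∃ i, A i ∩ (boxS R Uᶜ)ᶜ = ∅ := by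
          by_contra hcc
          push_neg at hcc
          have hfin : ∀ u : Finset I, ((boxS R Uᶜ)ᶜ ∩ ⋂ i ∈ u, A i).Nonempty := by
            intro u
            obtain ⟨k, hk⟩ := finset_directed A hAdir u
            obtain ⟨z, hz1, hz2⟩ := (hcc k)
            exact ⟨z, hz2, mem_biInter fun i hi => hk i hi hz1⟩
          obtain ⟨z, hz1, hz2⟩ := hscomp.inter_iInter_nonempty A hAcl hfin
          exact hz1 (hCD hz2)
        obtain ⟨i, hi⟩ := hex
        have hAiD : A i ⊆ boxS R Uᶜ := by
          intro y hy
          by_contra hny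
          rw [eq_empty_iff_forall_notMem] at hi
          exact hi y ⟨hy, hny⟩
        obtain ⟨y, hyx, hyA⟩ := hx i
        exact hAiD hyA x hyx hxU
      · rintro x ⟨y, hyx, hy⟩
        rw [mem_iInter]
        exact fun i => ⟨y, hyx, mem_iInter.mp hy i⟩
end

section
/- Let (X, K, R) be a generalized modal space. Then the formula □(□p → p) is admissibly valid on X if and only if R satisfies ∀x ∀y (R x y → R y y); explicitly, the following are equivalent: (i) for every U ∈ D_K(X) and every x ∈ X, for all y with R x y, if R(y) ⊆ U then y ∈ U; (ii) for all x, y ∈ X, R x y implies R y y. -/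
open Set TopologicalSpace

/-- Correspondence for `□(□p → p)`: the formula is admissibly valid on a generalized modal
space iff `∀ x y, R x y → R y y`. -/
theorem stmt19 {X : Type*} [TopologicalSpace X] {K : Set (Set X)} {R : X → X → Prop}
    (hX : IsGenModal K R) :
    (∀ U ∈ DK K, ∀ x y : X, R x y → ((∀ w, R y w → w ∈ U) → y ∈ U)) ↔
    (∀ x y : X, R x y → R y y) := by

  constructor
  · intro h x y hxy
    by_contra hyy
    -- separate y from the closed set R(y)
    have hstone := hX.toIsGenStone
    set Y : Set X := {z | R y z} with hY
    have hYc : IsClosed Y := hX.closed_succ y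
    set I : Set (Set X) := {C ∈ K | y ∈ C} with hI
    have hIK : I ⊆ K := fun C hC => hC.1
    have hIne : I.Nonempty := by
      obtain ⟨C, hCK, hyC, -⟩ := hstone.basis.exists_subset_of_mem_open (mem_univ y) isOpen_univ
      exact ⟨C, hCK, hyC⟩
    have hdir : DirDown I := by
      intro U hU V hV
      have hopen : IsOpen (U ∩ V) :=
        (hstone.basis.isOpen hU.1).inter (hstone.basis.isOpen hV.1)
      obtain ⟨W, hWK, hyW, hWsub⟩ :=
        hstone.basis.exists_subset_of_mem_open (mem_inter hU.2 hV.2) hopen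
      exact ⟨W, ⟨hWK, hyW⟩, hWsub⟩
    have hInt : ⋂₀ I = {y} := by
      apply Subset.antisymm
      · intro z hz
        by_contra hzy
        obtain ⟨U, hUK, hyU, hzU⟩ := hstone.sep y z (fun e => hzy (by simp [e.symm]))
        exact hzU (hz U ⟨hUK, hyU⟩)
      · rintro z rfl U hU; exact hU.2
    -- some C ∈ I is disjoint from Y
    have : ¬ ∀ C ∈ I, (Y ∩ C).Nonempty := by
      intro hall
      obtain ⟨z, hzY, hzI⟩ := hstone.dir_inter Y hYc I hIK hIne hdir hall
      rw [hInt] at hzI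
      have hzy := mem_singleton_iff.mp hzI
      rw [hzy] at hzY
      exact hyy hzY
    push_neg at this
    obtain ⟨C, hCI, hCdisj⟩ := this
    have hU : Cᶜ ∈ DK K := by simpa [DK] using hCI.1
    have hres := h Cᶜ hU x y hxy (fun w hw hwC => by
      have : w ∈ Y ∩ C := ⟨hw, hwC⟩
      simp [hCdisj] at this)
    exact hres hCI.2
  · intro h U hU x y hxy hbox
    exact hbox y (h x y hxy)
end
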